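/- arXiv:1807.07040 — 4 statements merged into one kernel-verified Lean document; each statement's English description precedes it below -/
import Mathlib

section
/- (Tensor power property of the Brascamp–Lieb constant) Let v₁,…,v_N ∈ ℝ² be nonzero. For k ≥ 1 define Λ_k(f₁,…,f_N) = ∫_{ℝ^{2k}} ∏_{j=1}^N f_j(v_j·x) dx acting on nonnegative measurable functions on ℝ^k, where v·x = v¹x¹ + v²x² for x = (x¹,x²) ∈ ℝ^k × ℝ^k. Fix exponents p₁,…,p_N ∈ [1,∞] and let C_k be the smallest constant (possibly infinite) such that Λ_k(f₁,…,f_N) ≤ C_k ∏_j ‖f_j‖_{L^{p_j}(ℝ^k)}. Then C_k = (C₁)^k for every k ≥ 1. -/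
open MeasureTheory

/-- For `v = (v¹,v²) ∈ ℝ²` and `x = (x¹,x²) ∈ ℝ^k × ℝ^k`, `v·x = v¹x¹ + v²x² ∈ ℝ^k`. -/
noncomputable def dotVec {k : ℕ} (v : ℝ × ℝ)
    (x : EuclideanSpace ℝ (Fin k) × EuclideanSpace ℝ (Fin k)) : EuclideanSpace ℝ (Fin k) :=
  v.1 • x.1 + v.2 • x.2

/-- The `L^p(ℝ^k)` norm of an `[0,∞]`-valued function, `p ∈ [1,∞]`. -/
noncomputable def lpNorm {k : ℕ} (f : EuclideanSpace ℝ (Fin k) → ENNReal) (p : ENNReal) :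
    ENNReal :=
  if p = ⊤ then essSup f volume else (∫⁻ x, f x ^ p.toReal) ^ (1 / p.toReal)

/-- The smallest (possibly infinite) constant `C_k` in the Brascamp–Lieb inequality
`Λ_k(f₁,…,f_N) ≤ C_k ∏_j ‖f_j‖_{L^{p_j}(ℝ^k)}`. -/
noncomputable def BLconst (N : ℕ) (v : Fin N → ℝ × ℝ) (p : Fin N → ENNReal) (k : ℕ) :
    ENNReal :=
  sInf {C : ENNReal |
    ∀ f : Fin N → (EuclideanSpace ℝ (Fin k) → ENNReal), (∀ j, Measurable (f j)) →
      (∫⁻ x : EuclideanSpace ℝ (Fin k) × EuclideanSpace ℝ (Fin k),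
          ∏ j, f j (dotVec (v j) x)) ≤ C * ∏ j, lpNorm (f j) (p j)}

open scoped Pointwise

namespace BLaux

abbrev E (k : ℕ) := EuclideanSpace ℝ (Fin k)

lemma continuous_dotVec {k : ℕ} (v : ℝ × ℝ) : Continuous (dotVec (k := k) v) := by
  unfold dotVec; fun_prop

lemma measurable_dotVec {k : ℕ} (v : ℝ × ℝ) : Measurable (dotVec (k := k) v) :=
  (continuous_dotVec v).measurable

/-- Preimage of a null set under `dotVec v` is null, for `v ≠ 0`. -/
lemma nullPreimage {k : ℕ} {v : ℝ × ℝ} (hv : v ≠ 0) {S : Set (E k)} (hS : volume S = 0) :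
    volume {x : E k × E k | dotVec v x ∈ S} = 0 := by
  obtain ⟨T, hST, hTm, hT0⟩ := exists_measurable_superset_of_null hS
  suffices h : volume {x : E k × E k | dotVec v x ∈ T} = 0 by
    exact measure_mono_null (fun x hx => (hST hx : dotVec v x ∈ T)) h
  have hTmeas : MeasurableSet {x : E k × E k | dotVec v x ∈ T} :=
    (measurable_dotVec v) hTm
  rw [Measure.volume_eq_prod, Measure.prod_apply hTmeas]
  rcases eq_or_ne v.2 0 with h2 | h2
  · have h1 : v.1 ≠ 0 := by
      intro h1; exact hv (Prod.ext h1 h2)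
    have hnull : volume {a : E k | v.1 • a ∈ T} = 0 := by
      have : {a : E k | v.1 • a ∈ T} = v.1⁻¹ • T := by
        ext a
        rw [Set.mem_smul_set_iff_inv_smul_mem₀ (inv_ne_zero h1)]
        simp [h1]
      rw [this, Measure.addHaar_smul]
      simp [hT0]
    have : ∀ᵐ a : E k, volume (Prod.mk a ⁻¹' {x : E k × E k | dotVec v x ∈ T}) = 0 := by
      filter_upwards [(measure_eq_zero_iff_ae_notMem.mp hnull)] with a ha
      have : (Prod.mk a ⁻¹' {x : E k × E k | dotVec v x ∈ T}) = ∅ := by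
        ext b; simp only [Set.mem_preimage, Set.mem_setOf_eq, Set.mem_empty_iff_false,
          iff_false]
        intro hb
        exact ha (by simpa [dotVec, h2] using hb)
      simp [this]
    rw [lintegral_congr_ae this]; simp
  · have : ∀ a : E k, volume (Prod.mk a ⁻¹' {x : E k × E k | dotVec v x ∈ T}) = 0 := by
      intro a
      have : (Prod.mk a ⁻¹' {x : E k × E k | dotVec v x ∈ T})
          = v.2⁻¹ • ((-(v.1 • a)) +ᵥ T) := by
        ext b
        rw [Set.mem_smul_set_iff_inv_smul_mem₀ (inv_ne_zero h2)]
        simp only [Set.mem_preimage, Set.mem_setOf_eq, inv_inv, Set.mem_vadd_set_iff_neg_vadd_mem]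
        simp [dotVec, smul_smul, h2, add_comm, vadd_eq_add, neg_add_eq_sub, sub_eq_iff_eq_add]
      rw [this, Measure.addHaar_smul]
      rw [measure_vadd]
      simp [hT0]
    rw [lintegral_congr fun a => this a]; simp


variable {k N : ℕ}

lemma lpNorm_congr {f g : E k → ENNReal} (h : f =ᵐ[volume] g) (p : ENNReal) :
    lpNorm f p = lpNorm g p := by
  unfold _root_.lpNorm
  rcases eq_or_ne p ⊤ with hp | hp
  · simp [hp, essSup_congr_ae h]
  · simp only [hp, if_false]
    congr 1
    exact lintegral_congr_ae (h.mono fun x hx => by simp only []; rw [hx])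

lemma lpNorm_mono {f g : E k → ENNReal} (h : ∀ x, f x ≤ g x) (p : ENNReal) :
    lpNorm f p ≤ lpNorm g p := by
  unfold _root_.lpNorm
  rcases eq_or_ne p ⊤ with hp | hp
  · simp only [hp, if_true]
    exact essSup_mono_ae (Filter.Eventually.of_forall h)
  · simp only [hp, if_false]
    exact ENNReal.rpow_le_rpow
      (lintegral_mono fun x => ENNReal.rpow_le_rpow (h x) ENNReal.toReal_nonneg)
      (one_div_nonneg.mpr ENNReal.toReal_nonneg)

lemma ae_zero_of_lpNorm_eq_zero {f : E k → ENNReal} (hf : Measurable f) {p : ENNReal}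
    (hp : 1 ≤ p) (h : lpNorm f p = 0) : f =ᵐ[volume] 0 := by
  have hp0 : p ≠ 0 := (lt_of_lt_of_le zero_lt_one hp).ne'
  unfold _root_.lpNorm at h
  rcases eq_or_ne p ⊤ with hptop | hptop
  · rw [if_pos hptop] at h
    filter_upwards [ENNReal.ae_le_essSup f] with x hx
    simpa [h] using hx
  · rw [if_neg hptop] at h
    have hpt : 0 < p.toReal := ENNReal.toReal_pos hp0 hptop
    rcases ENNReal.rpow_eq_zero_iff.mp h with ⟨h0, _⟩ | ⟨_, hlt⟩
    · have := (lintegral_eq_zero_iff (hf.pow measurable_const)).mp h0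
      filter_upwards [this] with x hx
      rcases ENNReal.rpow_eq_zero_iff.mp hx with ⟨h0', _⟩ | ⟨_, hlt'⟩
      · exact h0'
      · exact absurd hlt' (not_lt.mpr hpt.le)
    · exact absurd hlt (not_lt.mpr (one_div_nonneg.mpr ENNReal.toReal_nonneg))

lemma lam_congr {v : Fin N → ℝ × ℝ} (hv : ∀ j, v j ≠ 0)
    {f g : Fin N → E k → ENNReal} (h : ∀ j, f j =ᵐ[volume] g j) :
    ∫⁻ x : E k × E k, ∏ j, f j (dotVec (v j) x)
      = ∫⁻ x : E k × E k, ∏ j, g j (dotVec (v j) x) := by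
  apply lintegral_congr_ae
  have key : ∀ j, ∀ᵐ x : E k × E k, f j (dotVec (v j) x) = g j (dotVec (v j) x) := by
    intro j
    have hS : volume {y : E k | f j y ≠ g j y} = 0 := ae_iff.mp (h j)
    have h2 := nullPreimage (hv j) hS
    rw [ae_iff]
    exact measure_mono_null (fun x hx => hx) h2
  filter_upwards [ae_all_iff.mpr key] with x hx
  exact Finset.prod_congr rfl fun j _ => hx j

lemma measurable_coord (i : Fin k) : Measurable fun y : E k => y i :=
  (measurable_pi_apply i).comp ((MeasurableEquiv.toLp 2 (Fin k → ℝ)).symm).measurable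

/-- The cube of radius δ. -/
def Box (k : ℕ) (δ : ℝ) : Set (E k) := {y | ∀ i, |y i| ≤ δ}

lemma measurableSet_Box (δ : ℝ) : MeasurableSet (Box k δ) := by
  have : Box k δ = ⋂ i, {y : E k | |y i| ≤ δ} := by
    ext y; simp [Box, Set.mem_iInter]
  rw [this]
  exact MeasurableSet.iInter fun i =>
    measurableSet_le ((measurable_coord i).abs) measurable_const

lemma ball_subset_Box {δ : ℝ} : Metric.ball (0 : E k) δ ⊆ Box k δ := by
  intro y hy i
  have h1 : ‖y‖ < δ := by simpa using hy
  have h2 : |y i| ≤ ‖y‖ := by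
    rw [EuclideanSpace.norm_eq]
    rw [← Real.sqrt_sq_eq_abs]
    apply Real.sqrt_le_sqrt
    exact Finset.single_le_sum (f := fun i => ‖y i‖ ^ 2) (fun i _ => sq_nonneg _)
      (Finset.mem_univ i) |>.trans_eq' (by simp [sq_abs])
  linarith

lemma Box_subset_closedBall {δ : ℝ} (hδ : 0 ≤ δ) :
    Box k δ ⊆ Metric.closedBall (0 : E k) (Real.sqrt (k * δ ^ 2)) := by
  intro y hy
  simp only [Metric.mem_closedBall, dist_zero_right]
  rw [EuclideanSpace.norm_eq]
  apply Real.sqrt_le_sqrt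
  calc ∑ i, ‖y i‖ ^ 2 ≤ ∑ _i : Fin k, δ ^ 2 := by
        apply Finset.sum_le_sum
        intro i _
        have h1 : |y i| ≤ δ := hy i
        calc ‖y i‖ ^ 2 = |y i| ^ 2 := by rw [Real.norm_eq_abs]
          _ ≤ δ ^ 2 := by nlinarith [abs_nonneg (y i)]
    _ = k * δ ^ 2 := by simp [Finset.sum_const, mul_comm]

lemma volume_Box_pos {δ : ℝ} (hδ : 0 < δ) : 0 < volume (Box k δ) :=
  lt_of_lt_of_le (Metric.measure_ball_pos volume (0 : E k) hδ) (measure_mono ball_subset_Box)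

lemma volume_Box_lt_top {δ : ℝ} (hδ : 0 ≤ δ) : volume (Box k δ) < ⊤ :=
  lt_of_le_of_lt (measure_mono (Box_subset_closedBall hδ)) measure_closedBall_lt_top


section Test

/-- Indicator of the unit cube, as test function. -/
noncomputable def testf : E k → ENNReal := (Box k 1).indicator fun _ => 1

lemma measurable_testf : Measurable (testf (k := k)) :=
  measurable_const.indicator (measurableSet_Box 1)

lemma testf_le_one (y : E k) : testf y ≤ 1 := by
  unfold testf
  by_cases h : y ∈ Box k 1 <;> simp [h]

variable (v : Fin N → ℝ × ℝ) (p : Fin N → ENNReal)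

lemma lam_testf_pos :
    0 < ∫⁻ x : E k × E k, ∏ j : Fin N, testf (dotVec (v j) x) := by
  set M : ℝ := ∑ j, (|(v j).1| + |(v j).2|) with hM
  have hM0 : 0 ≤ M := Finset.sum_nonneg fun j _ => by positivity
  set δ : ℝ := (1 + M)⁻¹ with hδdef
  have hδ : 0 < δ := by positivity
  have key : ∀ x ∈ (Box k δ) ×ˢ (Box k δ), ∀ j : Fin N, dotVec (v j) x ∈ Box k 1 := by
    rintro x ⟨h1, h2⟩ j i
    have e : (dotVec (v j) x) i = (v j).1 * x.1 i + (v j).2 * x.2 i := by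
      simp [dotVec, PiLp.add_apply, PiLp.smul_apply, smul_eq_mul]
    rw [e]
    have b1 : |x.1 i| ≤ δ := h1 i
    have b2 : |x.2 i| ≤ δ := h2 i
    have hj : |(v j).1| + |(v j).2| ≤ 1 + M := by
      have : (|(v j).1| + |(v j).2|) ≤ M :=
        Finset.single_le_sum (f := fun j => |(v j).1| + |(v j).2|)
          (fun j _ => by positivity) (Finset.mem_univ j)
      linarith
    have habs : |(v j).1 * x.1 i + (v j).2 * x.2 i|
        ≤ |(v j).1| * |x.1 i| + |(v j).2| * |x.2 i| :=
      (abs_add_le _ _).trans (by rw [abs_mul, abs_mul])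
    have h1a := abs_nonneg ((v j).1)
    have h2a := abs_nonneg ((v j).2)
    have hend : (1 + M) * δ = 1 := by
      rw [hδdef]; exact mul_inv_cancel₀ (by positivity)
    nlinarith [abs_nonneg (x.1 i), abs_nonneg (x.2 i)]
  calc (0:ENNReal) < volume ((Box k δ) ×ˢ (Box k δ)) := by
        rw [Measure.volume_eq_prod, Measure.prod_prod]
        exact ENNReal.mul_pos (volume_Box_pos hδ).ne' (volume_Box_pos hδ).ne'
    _ = ∫⁻ _x in (Box k δ) ×ˢ (Box k δ), (1:ENNReal) := (setLIntegral_one _).symm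
    _ = ∫⁻ x in (Box k δ) ×ˢ (Box k δ), ∏ j : Fin N, testf (dotVec (v j) x) := by
        apply setLIntegral_congr_fun_ae ((measurableSet_Box δ).prod (measurableSet_Box δ))
        apply Filter.Eventually.of_forall
        intro x hx
        symm
        unfold testf
        rw [Finset.prod_congr rfl (fun j _ => Set.indicator_of_mem (key x hx j) (fun _ => 1))]
        simp
    _ ≤ ∫⁻ x : E k × E k, ∏ j, testf (dotVec (v j) x) := setLIntegral_le_lintegral _ _

lemma lpNorm_testf_lt_top {q : ENNReal} (hq : 1 ≤ q) : lpNorm (testf (k := k)) q < ⊤ := by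
  unfold _root_.lpNorm
  rcases eq_or_ne q ⊤ with hqt | hqt
  · rw [if_pos hqt]
    exact lt_of_le_of_lt (essSup_le_of_ae_le 1 (Filter.Eventually.of_forall testf_le_one))
      ENNReal.one_lt_top
  · rw [if_neg hqt]
    have hq0 : (0:ℝ) < q.toReal := ENNReal.toReal_pos ((lt_of_lt_of_le zero_lt_one hq).ne') hqt
    have : ∫⁻ x, testf (k := k) x ^ q.toReal = volume (Box k 1) := by
      have he : ∀ x, testf (k := k) x ^ q.toReal = testf x := by
        intro x
        unfold testf
        by_cases h : x ∈ Box k 1 <;> simp [h, ENNReal.zero_rpow_of_pos hq0]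
      rw [lintegral_congr he]
      unfold testf
      rw [lintegral_indicator (measurableSet_Box 1), setLIntegral_one]
    rw [this]
    exact ENNReal.rpow_lt_top_of_nonneg (one_div_nonneg.mpr ENNReal.toReal_nonneg)
      (volume_Box_lt_top zero_le_one).ne

lemma lpNorm_testf_ne_zero {q : ENNReal} (hq : 1 ≤ q) : lpNorm (testf (k := k)) q ≠ 0 := by
  intro h
  have hz := ae_zero_of_lpNorm_eq_zero measurable_testf hq h
  have hB : volume (Box k 1) = 0 := by
    refine measure_mono_null ?_ (ae_iff.mp hz)
    intro y hy
    simp only [Set.mem_setOf_eq, Pi.zero_apply]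
    unfold testf
    simp [Set.indicator_of_mem hy]
  exact absurd hB (volume_Box_pos one_pos).ne'

lemma BLconst_pos (hp : ∀ j, 1 ≤ p j) (k : ℕ) : 0 < BLconst N v p k := by
  set Λ₀ := ∫⁻ x : E k × E k, ∏ j : Fin N, testf (dotVec (v j) x) with hΛ₀
  set P₀ := ∏ j : Fin N, lpNorm (testf (k := k)) (p j) with hP₀
  have hΛ : 0 < Λ₀ := lam_testf_pos v
  have hP0 : P₀ ≠ 0 := Finset.prod_ne_zero_iff.mpr fun j _ => lpNorm_testf_ne_zero (hp j)
  have hPt : P₀ ≠ ⊤ := (ENNReal.prod_lt_top fun j _ => lpNorm_testf_lt_top (hp j)).ne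
  have hc : 0 < Λ₀ / P₀ := ENNReal.div_pos hΛ.ne' hPt
  refine lt_of_lt_of_le hc (le_sInf ?_)
  intro C hC
  rw [ENNReal.div_le_iff_le_mul (Or.inl hP0) (Or.inl hPt)]
  exact hC (fun _ => testf) (fun _ => measurable_testf)

/-- The Brascamp–Lieb inequality with the optimal constant is valid. -/
lemma lam_le_BLconst_mul (hv : ∀ j, v j ≠ 0) (hp : ∀ j, 1 ≤ p j) (k : ℕ)
    (f : Fin N → E k → ENNReal) (hf : ∀ j, Measurable (f j)) :
    ∫⁻ x : E k × E k, ∏ j, f j (dotVec (v j) x)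
      ≤ BLconst N v p k * ∏ j, lpNorm (f j) (p j) := by
  set Λ := ∫⁻ x : E k × E k, ∏ j, f j (dotVec (v j) x) with hΛdef
  set P := ∏ j, lpNorm (f j) (p j) with hPdef
  by_cases h0 : ∃ j, lpNorm (f j) (p j) = 0
  · obtain ⟨j0, hj0⟩ := h0
    have hz := ae_zero_of_lpNorm_eq_zero (hf j0) (hp j0) hj0
    have hΛ0 : Λ = 0 := by
      rw [hΛdef, ← lintegral_zero]
      apply lintegral_congr_ae
      have hS : volume {y : E k | ¬ f j0 y = 0} = 0 := ae_iff.mp hz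
      have h2 := nullPreimage (hv j0) hS
      have : ∀ᵐ x : E k × E k, f j0 (dotVec (v j0) x) = 0 := by
        rw [ae_iff]; exact measure_mono_null (fun x hx => hx) h2
      filter_upwards [this] with x hx
      exact Finset.prod_eq_zero (Finset.mem_univ j0) hx
    rw [hΛ0]; exact zero_le
  · push_neg at h0
    rcases eq_or_ne P ⊤ with hPtop | hPtop
    · rw [hPtop, ENNReal.mul_top (BLconst_pos v p hp k).ne']
      exact le_top
    · have hP0 : P ≠ 0 := Finset.prod_ne_zero_iff.mpr fun j _ => h0 j
      have hdiv : Λ / P ≤ BLconst N v p k :=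
        le_sInf fun C hC =>
          (ENNReal.div_le_iff_le_mul (Or.inl hP0) (Or.inl hPtop)).mpr (hC f hf)
      exact (ENNReal.div_le_iff_le_mul (Or.inl hP0) (Or.inl hPtop)).mp hdiv

end Test


section Equivs

/-- `ℝ ≃ᵐ E 1`, volume preserving. -/
noncomputable def emb : ℝ ≃ᵐ E 1 :=
  (MeasurableEquiv.funUnique (Fin 1) ℝ).symm.trans
    ((MeasurableEquiv.toLp 2 (Fin 1 → ℝ)).symm).symm

lemma emb_measurePreserving : MeasurePreserving (emb) volume volume :=
  ((EuclideanSpace.volume_preserving_symm_measurableEquiv_toLp (Fin 1)).symm).comp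
    (volume_preserving_funUnique (Fin 1) ℝ).symm

lemma emb_apply (a : ℝ) (i : Fin 1) : emb a i = a := rfl

lemma emb_symm_apply (y : E 1) : emb.symm y = y 0 := rfl

/-- Slicing equivalence `E (k+1) ≃ᵐ E 1 × E k`, volume preserving. -/
noncomputable def sliceEquiv (k : ℕ) : E (k + 1) ≃ᵐ (E 1) × (E k) :=
  ((MeasurableEquiv.toLp 2 (Fin (k+1) → ℝ)).symm).trans
    ((MeasurableEquiv.piFinSuccAbove (fun _ : Fin (k+1) => ℝ) 0).trans
      ((((MeasurableEquiv.funUnique (Fin 1) ℝ).symm.trans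
          ((MeasurableEquiv.toLp 2 (Fin 1 → ℝ)).symm).symm)).prodCongr
        ((MeasurableEquiv.toLp 2 (Fin k → ℝ)).symm).symm))

lemma sliceEquiv_measurePreserving (k : ℕ) :
    MeasurePreserving (sliceEquiv k) volume volume := by
  have h1 := EuclideanSpace.volume_preserving_symm_measurableEquiv_toLp (Fin (k+1))
  have h2 := volume_preserving_piFinSuccAbove (fun _ : Fin (k+1) => ℝ) 0
  have h3 : MeasurePreserving
      ((MeasurableEquiv.funUnique (Fin 1) ℝ).symm.trans
        ((MeasurableEquiv.toLp 2 (Fin 1 → ℝ)).symm).symm) volume volume :=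
    ((EuclideanSpace.volume_preserving_symm_measurableEquiv_toLp (Fin 1)).symm).comp
      (volume_preserving_funUnique (Fin 1) ℝ).symm
  have h4 := (EuclideanSpace.volume_preserving_symm_measurableEquiv_toLp (Fin k)).symm
  exact ((h3.prod h4).comp h2).comp h1

lemma sliceEquiv_fst (y : E (k+1)) (i : Fin 1) : ((sliceEquiv k) y).1 i = y 0 := rfl

lemma sliceEquiv_snd (y : E (k+1)) (i : Fin k) : ((sliceEquiv k) y).2 i = y i.succ := by
  show y (Fin.succAbove 0 i) = y i.succ
  rw [Fin.succAbove_zero]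

lemma sliceEquiv_dotVec (v : ℝ × ℝ) (x : E (k+1) × E (k+1)) :
    sliceEquiv k (dotVec v x)
      = (dotVec v (((sliceEquiv k) x.1).1, ((sliceEquiv k) x.2).1),
         dotVec v (((sliceEquiv k) x.1).2, ((sliceEquiv k) x.2).2)) := by
  have hcoord : ∀ (y z : E (k+1)) (c d : ℝ) (i : Fin (k+1)),
      (c • y + d • z : E (k+1)) i = c * y i + d * z i := by
    intro y z c d i
    simp [PiLp.add_apply, PiLp.smul_apply, smul_eq_mul]
  refine Prod.ext ?_ ?_
  · ext i
    show ((sliceEquiv k) (dotVec v x)).1 i = _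
    rw [sliceEquiv_fst]
    show (dotVec v x) 0 = (v.1 • ((sliceEquiv k) x.1).1 + v.2 • ((sliceEquiv k) x.2).1) i
    rw [dotVec, hcoord]
    simp [PiLp.add_apply, PiLp.smul_apply, smul_eq_mul, sliceEquiv_fst]
  · ext i
    show ((sliceEquiv k) (dotVec v x)).2 i = _
    rw [sliceEquiv_snd]
    show (dotVec v x) i.succ = (v.1 • ((sliceEquiv k) x.1).2 + v.2 • ((sliceEquiv k) x.2).2) i
    rw [dotVec, hcoord]
    simp [PiLp.add_apply, PiLp.smul_apply, smul_eq_mul, sliceEquiv_snd]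

lemma dotVec_sliceEquiv_symm (v : ℝ × ℝ) (u w : (E 1) × (E k)) :
    dotVec v ((sliceEquiv k).symm u, (sliceEquiv k).symm w)
      = (sliceEquiv k).symm (dotVec v (u.1, w.1), dotVec v (u.2, w.2)) := by
  have := sliceEquiv_dotVec v ((sliceEquiv k).symm u, (sliceEquiv k).symm w)
  simp only [MeasurableEquiv.apply_symm_apply] at this
  have h2 := congrArg (sliceEquiv k).symm this
  rwa [MeasurableEquiv.symm_apply_apply] at h2

end Equivs


section Trunc
variable {m : ℕ}

noncomputable def trunc (q : ENNReal) (f : E m → ENNReal) : E m → ENNReal :=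
  if q = ⊤ then fun y => min (f y) (lpNorm f ⊤) else f

lemma measurable_trunc (q : ENNReal) {f : E m → ENNReal} (hf : Measurable f) :
    Measurable (trunc q f) := by
  unfold trunc; split_ifs
  · exact hf.min measurable_const
  · exact hf

lemma trunc_ae_eq (q : ENNReal) (f : E m → ENNReal) : trunc q f =ᵐ[volume] f := by
  unfold trunc; split_ifs with h
  · have he : lpNorm f ⊤ = essSup f volume := by simp [_root_.lpNorm]
    filter_upwards [ENNReal.ae_le_essSup f] with y hy
    show min (f y) (lpNorm f ⊤) = f y
    rw [he, min_eq_left hy]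
  · rfl

lemma trunc_le_top {f : E m → ENNReal} (y : E m) : trunc ⊤ f y ≤ lpNorm f ⊤ := by
  unfold trunc; simp

lemma lpNorm_trunc (q r : ENNReal) (f : E m → ENNReal) : lpNorm (trunc q f) r = lpNorm f r :=
  lpNorm_congr (trunc_ae_eq q f) r

end Trunc

section Step

lemma lintegral_vol_prod {α β : Type*} [MeasureSpace α] [MeasureSpace β]
    [SigmaFinite (volume : Measure α)] [SigmaFinite (volume : Measure β)]
    (F : α × β → ENNReal) (hF : Measurable F) :
    ∫⁻ w : α × β, F w = ∫⁻ a : α, ∫⁻ b : β, F (a, b) := by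
  rw [Measure.volume_eq_prod]
  exact lintegral_prod F hF.aemeasurable

variable {v : Fin N → ℝ × ℝ} {p : Fin N → ENNReal}

lemma BLconst_succ_le (hv : ∀ j, v j ≠ 0) (hp : ∀ j, 1 ≤ p j) (k : ℕ) :
    BLconst N v p (k + 1) ≤ BLconst N v p 1 * BLconst N v p k := by
  set C1 := BLconst N v p 1 with hC1
  set Ck := BLconst N v p k with hCk
  apply sInf_le
  rw [Set.mem_setOf_eq]
  intro f hf
  haveI sf1 : SigmaFinite (volume : Measure (E 1 × E k)) := by
    rw [Measure.volume_eq_prod]; infer_instance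
  set τ := sliceEquiv k with hτdef
  have hτ := sliceEquiv_measurePreserving k
  have hτs : MeasurePreserving (⇑(sliceEquiv k).symm)
      (volume : Measure (E 1 × E k)) volume := MeasurePreserving.symm _ hτ
  set g : Fin N → E (k+1) → ENNReal := fun j => trunc (p j) (f j) with hgdef
  have hg : ∀ j, Measurable (g j) := fun j => measurable_trunc _ (hf j)
  set h : Fin N → E 1 → ENNReal := fun j =>
    if p j = ⊤ then fun _ => lpNorm (f j) ⊤
    else fun t => lpNorm (fun u : E k => g j (τ.symm (t, u))) (p j) with hhdef
  have hmeas_pair : ∀ j, Measurable fun q : E 1 × E k => g j (τ.symm q) :=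
    fun j => (hg j).comp τ.symm.measurable
  have hh : ∀ j, Measurable (h j) := by
    intro j
    rw [hhdef]
    dsimp only
    split_ifs with hptop
    · exact measurable_const
    · simp only [_root_.lpNorm, if_neg hptop]
      apply Measurable.pow _ measurable_const
      apply Measurable.lintegral_prod_right
        (f := fun t (u : E k) => g j (τ.symm (t, u)) ^ (p j).toReal)
      exact (hmeas_pair j).pow measurable_const
  set G : (E 1 × E k) × (E 1 × E k) → ENNReal := fun w =>
    ∏ j, g j (τ.symm (dotVec (v j) (w.1.1, w.2.1), dotVec (v j) (w.1.2, w.2.2))) with hGdef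
  have hGj : ∀ j, Measurable fun w : (E 1 × E k) × (E 1 × E k) =>
      g j (τ.symm (dotVec (v j) (w.1.1, w.2.1), dotVec (v j) (w.1.2, w.2.2))) := by
    intro j
    apply (hg j).comp
    apply τ.symm.measurable.comp
    apply Measurable.prodMk
    · exact (measurable_dotVec _).comp ((measurable_fst.fst).prodMk (measurable_snd.fst))
    · exact (measurable_dotVec _).comp ((measurable_fst.snd).prodMk (measurable_snd.snd))
  have hG : Measurable G := Finset.measurable_prod _ fun j _ => hGj j
  -- Step 1-2 : transfer to the sliced coordinates
  have step12 : (∫⁻ x : E (k+1) × E (k+1), ∏ j, f j (dotVec (v j) x))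
      = ∫⁻ w : (E 1 × E k) × (E 1 × E k), G w := by
    rw [lam_congr hv (fun j => (trunc_ae_eq (p j) (f j)).symm)]
    have hΦ : MeasurePreserving (Prod.map τ τ)
        (volume : Measure (E (k+1) × E (k+1)))
        (volume : Measure ((E 1 × E k) × (E 1 × E k))) := by
      rw [Measure.volume_eq_prod, Measure.volume_eq_prod]
      exact hτ.prod hτ
    rw [← hΦ.lintegral_comp hG]
    apply lintegral_congr
    intro x
    rw [hGdef]
    simp only [Prod.map_fst, Prod.map_snd]
    refine Finset.prod_congr rfl fun j _ => ?_
    congr 1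
    have hdv := sliceEquiv_dotVec (v j) x
    rw [← hτdef] at hdv
    rw [← hdv, MeasurableEquiv.symm_apply_apply]
  -- Step 3 : Fubini reordering
  have hswap1 : ∀ a : E 1,
      (∫⁻ y : E k, ∫⁻ w : E 1 × E k, G ((a, y), w))
        = ∫⁻ w : E 1 × E k, ∫⁻ y : E k, G ((a, y), w) := by
    intro a
    apply lintegral_lintegral_swap
    exact (hG.comp ((measurable_const.prodMk measurable_fst).prodMk
      measurable_snd)).aemeasurable
  have hswap2 : ∀ (a b : E 1),
      (∫⁻ z : E k, ∫⁻ y : E k, G ((a, y), (b, z)))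
        = ∫⁻ y : E k, ∫⁻ z : E k, G ((a, y), (b, z)) := by
    intro a b
    apply lintegral_lintegral_swap
    exact (hG.comp ((measurable_const.prodMk measurable_snd).prodMk
      (measurable_const.prodMk measurable_fst))).aemeasurable
  have step3 : (∫⁻ w : (E 1 × E k) × (E 1 × E k), G w)
      = ∫⁻ a : E 1, ∫⁻ b : E 1, ∫⁻ q : E k × E k, G ((a, q.1), (b, q.2)) :=
    calc (∫⁻ w : (E 1 × E k) × (E 1 × E k), G w)
        = ∫⁻ u : E 1 × E k, ∫⁻ w : E 1 × E k, G (u, w) := lintegral_vol_prod G hG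
      _ = ∫⁻ a : E 1, ∫⁻ y : E k, ∫⁻ w : E 1 × E k, G ((a, y), w) :=
          lintegral_vol_prod (fun u => ∫⁻ w : E 1 × E k, G (u, w))
            (Measurable.lintegral_prod_right (f := fun u w => G (u, w)) hG)
      _ = ∫⁻ a : E 1, ∫⁻ w : E 1 × E k, ∫⁻ y : E k, G ((a, y), w) :=
          lintegral_congr fun a => hswap1 a
      _ = ∫⁻ a : E 1, ∫⁻ b : E 1, ∫⁻ z : E k, ∫⁻ y : E k, G ((a, y), (b, z)) :=
          lintegral_congr fun a =>
            lintegral_vol_prod (fun w => ∫⁻ y : E k, G ((a, y), w))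
              (Measurable.lintegral_prod_right (f := fun w y => G ((a, y), w))
                (hG.comp ((measurable_const.prodMk measurable_snd).prodMk
                  measurable_fst)))
      _ = ∫⁻ a : E 1, ∫⁻ b : E 1, ∫⁻ y : E k, ∫⁻ z : E k, G ((a, y), (b, z)) :=
          lintegral_congr fun a => lintegral_congr fun b => hswap2 a b
      _ = ∫⁻ a : E 1, ∫⁻ b : E 1, ∫⁻ q : E k × E k, G ((a, q.1), (b, q.2)) :=
          lintegral_congr fun a => lintegral_congr fun b =>
            (lintegral_vol_prod (fun q : E k × E k => G ((a, q.1), (b, q.2)))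
              (hG.comp ((measurable_const.prodMk measurable_fst).prodMk
                (measurable_const.prodMk measurable_snd)))).symm
  -- Step 4 : apply the dimension-k inequality to slices
  have step4 : ∀ a b : E 1,
      (∫⁻ q : E k × E k, G ((a, q.1), (b, q.2)))
        ≤ Ck * ∏ j, h j (dotVec (v j) (a, b)) := by
    intro a b
    have hFj : ∀ j, Measurable fun u : E k => g j (τ.symm (dotVec (v j) (a, b), u)) :=
      fun j => (hmeas_pair j).comp (measurable_const.prodMk measurable_id)
    have happ := lam_le_BLconst_mul v p hv hp k
      (fun j u => g j (τ.symm (dotVec (v j) (a, b), u))) hFj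
    refine le_trans (le_of_eq ?_) (happ.trans ?_)
    · apply lintegral_congr
      intro q
      rfl
    · rw [← hCk]
      apply mul_le_mul_right
      apply Finset.prod_le_prod'
      intro j _
      by_cases hptop : p j = ⊤
      · have hb : ∀ u : E k, g j (τ.symm (dotVec (v j) (a, b), u)) ≤ lpNorm (f j) ⊤ := by
          intro u
          rw [hgdef]
          simp only [hptop]
          exact trunc_le_top _
        have h1 : lpNorm (fun u : E k => g j (τ.symm (dotVec (v j) (a, b), u))) (p j)
            ≤ lpNorm (f j) ⊤ := by
          rw [_root_.lpNorm, if_pos hptop]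
          exact essSup_le_of_ae_le _ (Filter.Eventually.of_forall hb)
        rw [hhdef]
        simpa only [if_pos hptop] using h1
      · rw [hhdef]
        simp only [if_neg hptop]
        exact le_rfl
  -- Step 5-6 : integrate the bound and apply the dimension-1 inequality
  have hhd : Measurable fun w' : E 1 × E 1 => ∏ j, h j (dotVec (v j) w') :=
    Finset.measurable_prod _ fun j _ => (hh j).comp (measurable_dotVec _)
  have step5 : (∫⁻ a : E 1, ∫⁻ b : E 1, Ck * ∏ j, h j (dotVec (v j) (a, b)))
      = Ck * ∫⁻ w' : E 1 × E 1, ∏ j, h j (dotVec (v j) w') := by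
    have inner : ∀ a : E 1,
        (∫⁻ b : E 1, Ck * ∏ j, h j (dotVec (v j) (a, b)))
          = Ck * ∫⁻ b : E 1, ∏ j, h j (dotVec (v j) (a, b)) := fun a =>
      lintegral_const_mul Ck (hhd.comp (measurable_const.prodMk measurable_id))
    calc (∫⁻ a : E 1, ∫⁻ b : E 1, Ck * ∏ j, h j (dotVec (v j) (a, b)))
        = ∫⁻ a : E 1, Ck * ∫⁻ b : E 1, ∏ j, h j (dotVec (v j) (a, b)) :=
          lintegral_congr inner
      _ = Ck * ∫⁻ a : E 1, ∫⁻ b : E 1, ∏ j, h j (dotVec (v j) (a, b)) :=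
          lintegral_const_mul Ck
            (Measurable.lintegral_prod_right
              (f := fun a b => ∏ j, h j (dotVec (v j) (a, b))) hhd)
      _ = Ck * ∫⁻ w' : E 1 × E 1, ∏ j, h j (dotVec (v j) w') := by
          rw [lintegral_vol_prod (fun w' => ∏ j, h j (dotVec (v j) w')) hhd]
  have step6 : (∫⁻ w' : E 1 × E 1, ∏ j, h j (dotVec (v j) w'))
      ≤ C1 * ∏ j, lpNorm (h j) (p j) :=
    lam_le_BLconst_mul v p hv hp 1 h hh
  -- Step 7 : sliced norms are bounded by the full norms
  have step7 : ∀ j, lpNorm (h j) (p j) ≤ lpNorm (f j) (p j) := by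
    intro j
    by_cases hptop : p j = ⊤
    · rw [hhdef]
      simp only [if_pos hptop]
      rw [_root_.lpNorm, if_pos hptop, hptop]
      exact essSup_le_of_ae_le _ (Filter.Eventually.of_forall fun _ => le_rfl)
    · apply le_of_eq
      have hpt : 0 < (p j).toReal :=
        ENNReal.toReal_pos ((lt_of_lt_of_le zero_lt_one (hp j)).ne') hptop
      rw [_root_.lpNorm, if_neg hptop, _root_.lpNorm, if_neg hptop]
      congr 1
      have hb : ∀ t : E 1, h j t ^ (p j).toReal
          = ∫⁻ u : E k, g j (τ.symm (t, u)) ^ (p j).toReal := by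
        intro t
        rw [hhdef]
        simp only [if_neg hptop, _root_.lpNorm]
        rw [← ENNReal.rpow_mul, one_div, inv_mul_cancel₀ hpt.ne', ENNReal.rpow_one]
      rw [lintegral_congr hb]
      have e1 : (∫⁻ t : E 1, ∫⁻ u : E k, g j (τ.symm (t, u)) ^ (p j).toReal)
          = ∫⁻ q : E 1 × E k, g j (τ.symm q) ^ (p j).toReal :=
        (lintegral_vol_prod (fun q : E 1 × E k => g j (τ.symm q) ^ (p j).toReal)
          ((hmeas_pair j).pow measurable_const)).symm
      have e2 : (∫⁻ q : E 1 × E k, g j (τ.symm q) ^ (p j).toReal)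
          = ∫⁻ y : E (k+1), g j y ^ (p j).toReal :=
        hτs.lintegral_comp ((hg j).pow measurable_const)
      rw [e1, e2]
      apply lintegral_congr_ae
      filter_upwards [trunc_ae_eq (p j) (f j)] with y hy
      rw [hgdef]
      simp only []
      rw [hy]
  -- put everything together
  calc (∫⁻ x : E (k+1) × E (k+1), ∏ j, f j (dotVec (v j) x))
      = ∫⁻ a : E 1, ∫⁻ b : E 1, ∫⁻ q : E k × E k, G ((a, q.1), (b, q.2)) := by
        rw [step12, step3]
    _ ≤ ∫⁻ a : E 1, ∫⁻ b : E 1, Ck * ∏ j, h j (dotVec (v j) (a, b)) :=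
        lintegral_mono fun a => lintegral_mono fun b => step4 a b
    _ = Ck * ∫⁻ w' : E 1 × E 1, ∏ j, h j (dotVec (v j) w') := step5
    _ ≤ Ck * (C1 * ∏ j, lpNorm (h j) (p j)) := mul_le_mul_right step6 _
    _ ≤ Ck * (C1 * ∏ j, lpNorm (f j) (p j)) := by
        apply mul_le_mul_right
        apply mul_le_mul_right
        exact Finset.prod_le_prod' fun j _ => step7 j
    _ = C1 * Ck * ∏ j, lpNorm (f j) (p j) := by ring

end Step


section Tensor

/-- Tensor power of a one-dimensional function. -/
noncomputable def tens (m : ℕ) (φ : E 1 → ENNReal) : E m → ENNReal :=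
  fun y => ∏ i : Fin m, φ (emb (y i))

lemma measurable_tens (m : ℕ) {φ : E 1 → ENNReal} (hφ : Measurable φ) :
    Measurable (tens m φ) :=
  Finset.measurable_prod _ fun i _ =>
    hφ.comp (emb.measurable.comp (measurable_coord i))

lemma tens_le_pow (m : ℕ) {φ : E 1 → ENNReal} {c : ENNReal} (hc : ∀ t, φ t ≤ c)
    (y : E m) : tens m φ y ≤ c ^ m := by
  calc tens m φ y ≤ ∏ _i : Fin m, c := Finset.prod_le_prod' fun i _ => hc _
    _ = c ^ m := by simp

lemma tens_slice {k : ℕ} (φ : E 1 → ENNReal) (t : E 1) (u : E k) :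
    tens (k+1) φ ((sliceEquiv k).symm (t, u)) = φ t * tens k φ u := by
  have hy0 : ((sliceEquiv k).symm (t, u)) 0 = t 0 := by
    have h0 := sliceEquiv_fst ((sliceEquiv k).symm (t, u)) 0
    rw [MeasurableEquiv.apply_symm_apply] at h0
    exact h0.symm
  have hysucc : ∀ i : Fin k, ((sliceEquiv k).symm (t, u)) i.succ = u i := by
    intro i
    have h1 := sliceEquiv_snd ((sliceEquiv k).symm (t, u)) i
    rw [MeasurableEquiv.apply_symm_apply] at h1
    exact h1.symm
  have hembt : emb (t 0) = t := by
    ext i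
    have hi : i = 0 := Subsingleton.elim i 0
    rw [hi]; rfl
  have h2 : (∏ i : Fin k, φ (emb (((sliceEquiv k).symm (t, u)) i.succ)))
      = ∏ i : Fin k, φ (emb (u i)) :=
    Finset.prod_congr rfl fun i _ => by rw [hysucc i]
  unfold tens
  rw [Fin.prod_univ_succ, hy0, hembt, h2]

lemma volume_univ_E0 : volume (Set.univ : Set (E 0)) = 1 := by
  have h := EuclideanSpace.volume_preserving_symm_measurableEquiv_toLp (Fin 0)
  have h2 : (volume : Measure (Fin 0 → ℝ)) Set.univ = 1 := by
    rw [MeasureTheory.volume_pi, Measure.pi_univ]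
    simp
  calc volume (Set.univ : Set (E 0))
      = (Measure.map (⇑((MeasurableEquiv.toLp 2 (Fin 0 → ℝ)).symm)) volume) Set.univ := by
        rw [Measure.map_apply ((MeasurableEquiv.toLp 2 (Fin 0 → ℝ)).symm).measurable
          MeasurableSet.univ, Set.preimage_univ]
    _ = 1 := by rw [h.map_eq]; exact h2

lemma lintegral_one_E0sq : (∫⁻ _q : E 0 × E 0, (1 : ENNReal)) = 1 := by
  rw [lintegral_one, Measure.volume_eq_prod, ← Set.univ_prod_univ, Measure.prod_prod,
    volume_univ_E0, mul_one]

/-- Tensor powers split the `p`-th moment integral. -/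
lemma lintegral_tens_rpow {φ : E 1 → ENNReal} (hφ : Measurable φ) (c : ℝ) (hc : 0 ≤ c) :
    ∀ m : ℕ, (∫⁻ y : E m, tens m φ y ^ c) = (∫⁻ t : E 1, φ t ^ c) ^ m := by
  intro m
  induction m with
  | zero =>
      have : ∀ y : E 0, tens 0 φ y ^ c = 1 := by
        intro y; unfold tens; simp [ENNReal.one_rpow]
      rw [lintegral_congr this, lintegral_one, volume_univ_E0, pow_zero]
  | succ m ih =>
      have hms := MeasurePreserving.symm _ (sliceEquiv_measurePreserving m)
      have hmeas : Measurable fun y : E (m+1) => tens (m+1) φ y ^ c :=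
        (measurable_tens (m+1) hφ).pow measurable_const
      have e1 : (∫⁻ y : E (m+1), tens (m+1) φ y ^ c)
          = ∫⁻ q : E 1 × E m, tens (m+1) φ ((sliceEquiv m).symm q) ^ c :=
        (hms.lintegral_comp hmeas).symm
      rw [e1]
      have e2 : ∀ q : E 1 × E m, tens (m+1) φ ((sliceEquiv m).symm q) ^ c
          = φ q.1 ^ c * tens m φ q.2 ^ c := by
        intro q
        rw [← ENNReal.mul_rpow_of_nonneg _ _ hc]
        congr 1
        calc tens (m+1) φ ((sliceEquiv m).symm q)
            = tens (m+1) φ ((sliceEquiv m).symm (q.1, q.2)) := by rw [Prod.mk.eta]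
          _ = φ q.1 * tens m φ q.2 := tens_slice φ q.1 q.2
      rw [lintegral_congr e2]
      haveI sf1 : SigmaFinite (volume : Measure (E 1 × E m)) := by
        rw [Measure.volume_eq_prod]; infer_instance
      rw [lintegral_vol_prod (fun q : E 1 × E m => φ q.1 ^ c * tens m φ q.2 ^ c)
        ((hφ.comp measurable_fst).pow measurable_const |>.mul
          (((measurable_tens m hφ).comp measurable_snd).pow measurable_const))]
      have e3 : ∀ t : E 1, (∫⁻ u : E m, φ t ^ c * tens m φ u ^ c)
          = φ t ^ c * ∫⁻ u : E m, tens m φ u ^ c :=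
        fun t => lintegral_const_mul _ ((measurable_tens m hφ).pow measurable_const)
      rw [lintegral_congr e3, lintegral_mul_const _ (hφ.pow measurable_const), ih,
        pow_succ, mul_comm]

end Tensor


section Lower

variable {v : Fin N → ℝ × ℝ} {p : Fin N → ENNReal}

lemma lintegral_reorder {k : ℕ} (G : (E 1 × E k) × (E 1 × E k) → ENNReal)
    (hG : Measurable G) :
    (∫⁻ w : (E 1 × E k) × (E 1 × E k), G w)
      = ∫⁻ a : E 1, ∫⁻ b : E 1, ∫⁻ q : E k × E k, G ((a, q.1), (b, q.2)) := by
  haveI sf1 : SigmaFinite (volume : Measure (E 1 × E k)) := by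
    rw [Measure.volume_eq_prod]; infer_instance
  have hswap1 : ∀ a : E 1,
      (∫⁻ y : E k, ∫⁻ w : E 1 × E k, G ((a, y), w))
        = ∫⁻ w : E 1 × E k, ∫⁻ y : E k, G ((a, y), w) := by
    intro a
    apply lintegral_lintegral_swap
    exact (hG.comp ((measurable_const.prodMk measurable_fst).prodMk
      measurable_snd)).aemeasurable
  have hswap2 : ∀ (a b : E 1),
      (∫⁻ z : E k, ∫⁻ y : E k, G ((a, y), (b, z)))
        = ∫⁻ y : E k, ∫⁻ z : E k, G ((a, y), (b, z)) := by
    intro a b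
    apply lintegral_lintegral_swap
    exact (hG.comp ((measurable_const.prodMk measurable_snd).prodMk
      (measurable_const.prodMk measurable_fst))).aemeasurable
  calc (∫⁻ w : (E 1 × E k) × (E 1 × E k), G w)
      = ∫⁻ u : E 1 × E k, ∫⁻ w : E 1 × E k, G (u, w) := lintegral_vol_prod G hG
    _ = ∫⁻ a : E 1, ∫⁻ y : E k, ∫⁻ w : E 1 × E k, G ((a, y), w) :=
        lintegral_vol_prod (fun u => ∫⁻ w : E 1 × E k, G (u, w))
          (Measurable.lintegral_prod_right (f := fun u w => G (u, w)) hG)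
    _ = ∫⁻ a : E 1, ∫⁻ w : E 1 × E k, ∫⁻ y : E k, G ((a, y), w) :=
        lintegral_congr fun a => hswap1 a
    _ = ∫⁻ a : E 1, ∫⁻ b : E 1, ∫⁻ z : E k, ∫⁻ y : E k, G ((a, y), (b, z)) :=
        lintegral_congr fun a =>
          lintegral_vol_prod (fun w => ∫⁻ y : E k, G ((a, y), w))
            (Measurable.lintegral_prod_right (f := fun w y => G ((a, y), w))
              (hG.comp ((measurable_const.prodMk measurable_snd).prodMk
                measurable_fst)))
    _ = ∫⁻ a : E 1, ∫⁻ b : E 1, ∫⁻ y : E k, ∫⁻ z : E k, G ((a, y), (b, z)) :=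
        lintegral_congr fun a => lintegral_congr fun b => hswap2 a b
    _ = ∫⁻ a : E 1, ∫⁻ b : E 1, ∫⁻ q : E k × E k, G ((a, q.1), (b, q.2)) :=
        lintegral_congr fun a => lintegral_congr fun b =>
          (lintegral_vol_prod (fun q : E k × E k => G ((a, q.1), (b, q.2)))
            (hG.comp ((measurable_const.prodMk measurable_fst).prodMk
              (measurable_const.prodMk measurable_snd)))).symm

lemma lintegral_slice {k : ℕ} (v : Fin N → ℝ × ℝ) (g : Fin N → E (k+1) → ENNReal)
    (hg : ∀ j, Measurable (g j)) :
    (∫⁻ x : E (k+1) × E (k+1), ∏ j, g j (dotVec (v j) x))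
      = ∫⁻ w : (E 1 × E k) × (E 1 × E k),
          ∏ j, g j ((sliceEquiv k).symm
            (dotVec (v j) (w.1.1, w.2.1), dotVec (v j) (w.1.2, w.2.2))) := by
  have hτ := sliceEquiv_measurePreserving k
  have hGj : ∀ j, Measurable fun w : (E 1 × E k) × (E 1 × E k) =>
      g j ((sliceEquiv k).symm
        (dotVec (v j) (w.1.1, w.2.1), dotVec (v j) (w.1.2, w.2.2))) := by
    intro j
    apply (hg j).comp
    apply (sliceEquiv k).symm.measurable.comp
    apply Measurable.prodMk
    · exact (measurable_dotVec _).comp ((measurable_fst.fst).prodMk (measurable_snd.fst))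
    · exact (measurable_dotVec _).comp ((measurable_fst.snd).prodMk (measurable_snd.snd))
  have hG : Measurable fun w : (E 1 × E k) × (E 1 × E k) =>
      ∏ j, g j ((sliceEquiv k).symm
        (dotVec (v j) (w.1.1, w.2.1), dotVec (v j) (w.1.2, w.2.2))) :=
    Finset.measurable_prod _ fun j _ => hGj j
  have hΦ : MeasurePreserving (Prod.map (sliceEquiv k) (sliceEquiv k))
      (volume : Measure (E (k+1) × E (k+1)))
      (volume : Measure ((E 1 × E k) × (E 1 × E k))) := by
    rw [Measure.volume_eq_prod, Measure.volume_eq_prod]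
    exact hτ.prod hτ
  rw [← hΦ.lintegral_comp hG]
  apply lintegral_congr
  intro x
  simp only [Prod.map_fst, Prod.map_snd]
  refine Finset.prod_congr rfl fun j _ => ?_
  congr 1
  have hdv := sliceEquiv_dotVec (v j) x
  rw [← hdv, MeasurableEquiv.symm_apply_apply]

lemma lam_tens (v : Fin N → ℝ × ℝ) (φ : Fin N → E 1 → ENNReal)
    (hφ : ∀ j, Measurable (φ j)) :
    ∀ m : ℕ, (∫⁻ q : E m × E m, ∏ j, tens m (φ j) (dotVec (v j) q))
      = (∫⁻ w : E 1 × E 1, ∏ j, φ j (dotVec (v j) w)) ^ m := by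
  intro m
  induction m with
  | zero =>
      have h1 : ∀ q : E 0 × E 0, (∏ j, tens 0 (φ j) (dotVec (v j) q)) = 1 := by
        intro q; unfold tens; simp
      rw [lintegral_congr h1, lintegral_one_E0sq, pow_zero]
  | succ m ih =>
      have hAm : Measurable fun w' : E 1 × E 1 => ∏ j, φ j (dotVec (v j) w') :=
        Finset.measurable_prod _ fun j _ => (hφ j).comp (measurable_dotVec _)
      have hBm : Measurable fun q : E m × E m => ∏ j, tens m (φ j) (dotVec (v j) q) :=
        Finset.measurable_prod _ fun j _ => (measurable_tens m (hφ j)).comp (measurable_dotVec _)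
      have htm : ∀ j, Measurable (tens (m+1) (φ j)) := fun j => measurable_tens _ (hφ j)
      rw [lintegral_slice v _ htm]
      have hint : ∀ w : (E 1 × E m) × (E 1 × E m),
          (∏ j, tens (m+1) (φ j) ((sliceEquiv m).symm
            (dotVec (v j) (w.1.1, w.2.1), dotVec (v j) (w.1.2, w.2.2))))
          = (∏ j, φ j (dotVec (v j) (w.1.1, w.2.1)))
              * ∏ j, tens m (φ j) (dotVec (v j) (w.1.2, w.2.2)) := by
        intro w
        rw [← Finset.prod_mul_distrib]
        exact Finset.prod_congr rfl fun j _ => tens_slice (φ j) _ _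
      rw [lintegral_congr hint]
      have hGm : Measurable fun w : (E 1 × E m) × (E 1 × E m) =>
          (∏ j, φ j (dotVec (v j) (w.1.1, w.2.1)))
            * ∏ j, tens m (φ j) (dotVec (v j) (w.1.2, w.2.2)) :=
        (hAm.comp ((measurable_fst.fst).prodMk (measurable_snd.fst))).mul
          (hBm.comp ((measurable_fst.snd).prodMk (measurable_snd.snd)))
      rw [lintegral_reorder _ hGm]
      calc (∫⁻ a : E 1, ∫⁻ b : E 1, ∫⁻ q : E m × E m,
              (∏ j, φ j (dotVec (v j) (a, b))) * ∏ j, tens m (φ j) (dotVec (v j) q))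
          = ∫⁻ a : E 1, ∫⁻ b : E 1, (∏ j, φ j (dotVec (v j) (a, b)))
              * ∫⁻ q : E m × E m, ∏ j, tens m (φ j) (dotVec (v j) q) :=
            lintegral_congr fun a => lintegral_congr fun b =>
              lintegral_const_mul _ hBm
        _ = ∫⁻ a : E 1, (∫⁻ b : E 1, ∏ j, φ j (dotVec (v j) (a, b)))
              * ∫⁻ q : E m × E m, ∏ j, tens m (φ j) (dotVec (v j) q) :=
            lintegral_congr fun a =>
              lintegral_mul_const _ (hAm.comp (measurable_const.prodMk measurable_id))
        _ = (∫⁻ a : E 1, ∫⁻ b : E 1, ∏ j, φ j (dotVec (v j) (a, b)))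
              * ∫⁻ q : E m × E m, ∏ j, tens m (φ j) (dotVec (v j) q) :=
            lintegral_mul_const _
              (Measurable.lintegral_prod_right
                (f := fun a b => ∏ j, φ j (dotVec (v j) (a, b))) hAm)
        _ = (∫⁻ w' : E 1 × E 1, ∏ j, φ j (dotVec (v j) w'))
              * ∫⁻ q : E m × E m, ∏ j, tens m (φ j) (dotVec (v j) q) := by
            rw [lintegral_vol_prod (fun w' : E 1 × E 1 => ∏ j, φ j (dotVec (v j) w')) hAm]
        _ = (∫⁻ w' : E 1 × E 1, ∏ j, φ j (dotVec (v j) w')) ^ (m+1) := by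
            rw [ih, ← pow_succ']

lemma lpNorm_tens_le {m : ℕ} {f : E 1 → ENNReal} (hf : Measurable f) {q : ENNReal}
    (hq : 1 ≤ q) :
    lpNorm (tens m (trunc q f)) q ≤ lpNorm f q ^ m := by
  by_cases hqt : q = ⊤
  · subst hqt
    rw [_root_.lpNorm, if_pos rfl]
    have hb : ∀ y, tens m (trunc ⊤ f) y ≤ lpNorm f ⊤ ^ m :=
      tens_le_pow m fun t => trunc_le_top t
    exact essSup_le_of_ae_le _ (Filter.Eventually.of_forall hb)
  · apply le_of_eq
    have htr : (∫⁻ t : E 1, trunc q f t ^ q.toReal) = ∫⁻ t : E 1, f t ^ q.toReal := by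
      apply lintegral_congr_ae
      filter_upwards [trunc_ae_eq q f] with t ht
      rw [ht]
    have h1 : lpNorm (tens m (trunc q f)) q
        = ((∫⁻ t : E 1, f t ^ q.toReal) ^ m) ^ (1 / q.toReal) := by
      rw [_root_.lpNorm, if_neg hqt,
        lintegral_tens_rpow (measurable_trunc q hf) q.toReal ENNReal.toReal_nonneg m, htr]
    have h2 : lpNorm f q = (∫⁻ t : E 1, f t ^ q.toReal) ^ (1 / q.toReal) := by
      rw [_root_.lpNorm, if_neg hqt]
    rw [h1, h2, ← ENNReal.rpow_natCast (∫⁻ t : E 1, f t ^ q.toReal) m,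
      ← ENNReal.rpow_natCast ((∫⁻ t : E 1, f t ^ q.toReal) ^ (1 / q.toReal)) m,
      ← ENNReal.rpow_mul, ← ENNReal.rpow_mul, mul_comm]

lemma pow_le_BLconst (hv : ∀ j, v j ≠ 0) (hp : ∀ j, 1 ≤ p j) (k : ℕ) (hk : k ≠ 0) :
    BLconst N v p 1 ^ k ≤ BLconst N v p k := by
  have hkr : ((k : ℝ)) ≠ 0 := Nat.cast_ne_zero.mpr hk
  have key : ∀ f : Fin N → E 1 → ENNReal, (∀ j, Measurable (f j)) →
      (∫⁻ w : E 1 × E 1, ∏ j, f j (dotVec (v j) w))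
        ≤ BLconst N v p k ^ (1/(k:ℝ)) * ∏ j, lpNorm (f j) (p j) := by
    intro f hf
    have hφ : ∀ j, Measurable (trunc (p j) (f j)) := fun j => measurable_trunc _ (hf j)
    have h0 : (∫⁻ w : E 1 × E 1, ∏ j, f j (dotVec (v j) w))
        = ∫⁻ w : E 1 × E 1, ∏ j, trunc (p j) (f j) (dotVec (v j) w) :=
      lam_congr hv (fun j => (trunc_ae_eq (p j) (f j)).symm)
    have h1 : (∫⁻ w : E 1 × E 1, ∏ j, trunc (p j) (f j) (dotVec (v j) w)) ^ k
        = ∫⁻ q : E k × E k, ∏ j, tens k (trunc (p j) (f j)) (dotVec (v j) q) :=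
      (lam_tens v _ hφ k).symm
    have h2 := lam_le_BLconst_mul v p hv hp k (fun j => tens k (trunc (p j) (f j)))
      (fun j => measurable_tens k (hφ j))
    have h3 : (∏ j, lpNorm (tens k (trunc (p j) (f j))) (p j))
        ≤ (∏ j, lpNorm (f j) (p j)) ^ k := by
      rw [← Finset.prod_pow]
      exact Finset.prod_le_prod' fun j _ => lpNorm_tens_le (hf j) (hp j)
    have h4 : (∫⁻ w : E 1 × E 1, ∏ j, f j (dotVec (v j) w)) ^ k
        ≤ BLconst N v p k * (∏ j, lpNorm (f j) (p j)) ^ k := by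
      rw [h0, h1]
      exact h2.trans (mul_le_mul_right h3 _)
    set Λ := ∫⁻ w : E 1 × E 1, ∏ j, f j (dotVec (v j) w) with hΛ
    set D := ∏ j, lpNorm (f j) (p j) with hD
    calc Λ = (Λ ^ k) ^ (1/(k:ℝ)) := by
          rw [← ENNReal.rpow_natCast Λ k, ← ENNReal.rpow_mul,
            mul_one_div, div_self hkr, ENNReal.rpow_one]
      _ ≤ (BLconst N v p k * D ^ k) ^ (1/(k:ℝ)) :=
          ENNReal.rpow_le_rpow h4 (by positivity)
      _ = BLconst N v p k ^ (1/(k:ℝ)) * D := by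
          rw [ENNReal.mul_rpow_of_nonneg _ _ (by positivity)]
          congr 1
          rw [← ENNReal.rpow_natCast D k, ← ENNReal.rpow_mul, mul_one_div, div_self hkr,
            ENNReal.rpow_one]
  have h1 : BLconst N v p 1 ≤ BLconst N v p k ^ (1/(k:ℝ)) := by
    apply sInf_le
    rw [Set.mem_setOf_eq]
    exact key
  calc BLconst N v p 1 ^ k ≤ (BLconst N v p k ^ (1/(k:ℝ))) ^ k := pow_le_pow_left' h1 k
    _ = BLconst N v p k := by
        rw [← ENNReal.rpow_natCast (BLconst N v p k ^ (1/(k:ℝ))) k, ← ENNReal.rpow_mul,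
          one_div, inv_mul_cancel₀ hkr, ENNReal.rpow_one]

end Lower

end BLaux

/-- Tensor power property of the Brascamp–Lieb constant: `C_k = (C₁)^k`. -/
theorem BLconst_tensor_power (N : ℕ) (v : Fin N → ℝ × ℝ) (hv : ∀ j, v j ≠ 0)
    (p : Fin N → ENNReal) (hp : ∀ j, 1 ≤ p j) (k : ℕ) (hk : 1 ≤ k) :
    BLconst N v p k = BLconst N v p 1 ^ k := by
  obtain ⟨m, rfl⟩ : ∃ m, k = m + 1 := ⟨k - 1, (Nat.succ_pred_eq_of_pos hk).symm⟩
  clear hk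
  induction m with
  | zero => simp
  | succ n ihn =>
      apply le_antisymm
      · calc BLconst N v p (n + 1 + 1)
            ≤ BLconst N v p 1 * BLconst N v p (n + 1) :=
              BLaux.BLconst_succ_le hv hp (n + 1)
          _ = BLconst N v p 1 * BLconst N v p 1 ^ (n + 1) := by rw [ihn]
          _ = BLconst N v p 1 ^ (n + 1 + 1) := (pow_succ' _ _).symm
      · exact BLaux.pow_le_BLconst hv hp (n + 1 + 1) (by omega)
end

section
/- (Subspace necessity) Let v₁,…,v_N ∈ ℝ² be nonzero, pairwise linearly independent, and Λ as above on ℝ^{2k}. If Λ(f₁,…,f_N) ≤ C ∏_j ‖ |·|^{λ_j} f_j ‖_{L^{p_j}(ℝ^k)} holds for all nonnegative measurable f_j with finite C, then for every ℓ = 1,…,N: ∑_{j≠ℓ} (1/p_j + λ_j/k) ≥ 1. -/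
open MeasureTheory Pointwise

namespace SubspaceAux

variable {k : ℕ}

instance : (volume : Measure (EuclideanSpace ℝ (Fin k) × EuclideanSpace ℝ (Fin k))).IsAddHaarMeasure :=
  Measure.prod.instIsAddHaarMeasure _ _

lemma lpNorm_mono {f g : EuclideanSpace ℝ (Fin k) → ENNReal} (h : ∀ t, f t ≤ g t) (p : ENNReal) :
    lpNorm f p ≤ lpNorm g p := by
  unfold _root_.lpNorm
  split
  · exact essSup_mono_ae (Filter.Eventually.of_forall h)
  · exact ENNReal.rpow_le_rpow
      (lintegral_mono fun t => ENNReal.rpow_le_rpow (h t) ENNReal.toReal_nonneg) (by positivity)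

lemma lpNorm_indicator_le (c : ENNReal) (s : Set (EuclideanSpace ℝ (Fin k)))
    (hs : MeasurableSet s) (p : ENNReal) (hp : 1 ≤ p) :
    lpNorm (fun t => c * s.indicator 1 t) p ≤ c * (volume s) ^ (1/p).toReal := by
  unfold _root_.lpNorm
  split
  · next hptop =>
    subst hptop
    simp only [one_div, ENNReal.inv_top, ENNReal.toReal_zero, ENNReal.rpow_zero, mul_one]
    refine essSup_le_of_ae_le c (Filter.Eventually.of_forall fun t => ?_)
    by_cases h : t ∈ s <;> simp [Set.indicator_of_mem, Set.indicator_of_notMem, h]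
  · next hptop =>
    have hq : (1:ℝ) ≤ p.toReal := by
      rw [← ENNReal.toReal_one]; exact ENNReal.toReal_mono hptop hp
    have hq0 : p.toReal ≠ 0 := by linarith
    have h1 : ∀ t, (c * s.indicator 1 t) ^ p.toReal
        = c ^ p.toReal * s.indicator 1 t := by
      intro t
      by_cases h : t ∈ s
      · simp [Set.indicator_of_mem, h]
      · simp [Set.indicator_of_notMem, h,
          ENNReal.zero_rpow_of_pos (by linarith : (0:ℝ) < p.toReal)]
    simp only [h1]
    rw [lintegral_const_mul _ (measurable_one.indicator hs), lintegral_indicator_one hs,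
      ENNReal.mul_rpow_of_nonneg _ _ (by positivity), ← ENNReal.rpow_mul,
      mul_one_div_cancel hq0, ENNReal.rpow_one]
    rw [one_div, one_div, ENNReal.toReal_inv]

lemma lp_bound (p : ENNReal) (hp : 1 ≤ p) (lam A B : ℝ) (hA : 0 < A) (hAB : A ≤ B) :
    lpNorm (fun t : EuclideanSpace ℝ (Fin k) => ENNReal.ofReal (‖t‖ ^ lam) *
        Set.indicator {t : EuclideanSpace ℝ (Fin k) | A ≤ ‖t‖ ∧ ‖t‖ ≤ B} 1 t) p
    ≤ ENNReal.ofReal (max (A ^ lam) (B ^ lam) *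
        (B ^ k * (volume (Metric.ball (0 : EuclideanSpace ℝ (Fin k)) 1)).toReal) ^ (1/p).toReal)
    := by
  have hB : 0 < B := lt_of_lt_of_le hA hAB
  set c : ℝ := max (A ^ lam) (B ^ lam) with hc
  have hc0 : 0 ≤ c := le_trans (Real.rpow_nonneg hA.le _) (le_max_left _ _)
  have hmono : ∀ t : EuclideanSpace ℝ (Fin k),
      ENNReal.ofReal (‖t‖ ^ lam) *
        Set.indicator {t : EuclideanSpace ℝ (Fin k) | A ≤ ‖t‖ ∧ ‖t‖ ≤ B} 1 t
      ≤ ENNReal.ofReal c *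
        Set.indicator (Metric.closedBall (0 : EuclideanSpace ℝ (Fin k)) B) 1 t := by
    intro t
    by_cases h : t ∈ {t : EuclideanSpace ℝ (Fin k) | A ≤ ‖t‖ ∧ ‖t‖ ≤ B}
    · have hmem : t ∈ Metric.closedBall (0 : EuclideanSpace ℝ (Fin k)) B := by
        simpa [Metric.mem_closedBall, dist_zero_right] using h.2
      rw [Set.indicator_of_mem h, Set.indicator_of_mem hmem]
      gcongr
      rcases le_or_gt 0 lam with hl | hl
      · exact le_max_of_le_right (Real.rpow_le_rpow (norm_nonneg t) h.2 hl)
      · exact le_max_of_le_left (Real.rpow_le_rpow_of_nonpos hA h.1 hl.le)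
    · rw [Set.indicator_of_notMem h, mul_zero]
      exact zero_le
  refine le_trans (lpNorm_mono hmono p) ?_
  refine le_trans (lpNorm_indicator_le _ _ measurableSet_closedBall p hp) ?_
  rw [Measure.addHaar_closedBall _ _ hB.le, finrank_euclideanSpace_fin]
  have hω : volume (Metric.ball (0 : EuclideanSpace ℝ (Fin k)) 1) ≠ ⊤ :=
    (measure_ball_lt_top).ne
  conv_lhs => rw [show volume (Metric.ball (0 : EuclideanSpace ℝ (Fin k)) 1)
      = ENNReal.ofReal ((volume (Metric.ball (0 : EuclideanSpace ℝ (Fin k)) 1)).toReal) from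
      (ENNReal.ofReal_toReal hω).symm, ← ENNReal.ofReal_mul (by positivity),
    ENNReal.ofReal_rpow_of_nonneg (by positivity) ENNReal.toReal_nonneg,
    ← ENNReal.ofReal_mul hc0]

/-- The change-of-variables equivalence. -/
noncomputable def Mequiv (a b : ℝ) (hd : a^2 + b^2 ≠ 0) :
    (EuclideanSpace ℝ (Fin k) × EuclideanSpace ℝ (Fin k)) ≃ₗ[ℝ]
    (EuclideanSpace ℝ (Fin k) × EuclideanSpace ℝ (Fin k)) where
  toFun yz := ((a^2+b^2)⁻¹ • (a • yz.1 - b • yz.2), (a^2+b^2)⁻¹ • (b • yz.1 + a • yz.2))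
  invFun x := (a • x.1 + b • x.2, -b • x.1 + a • x.2)
  map_add' x y := by
    refine Prod.ext ?_ ?_ <;> · dsimp; module
  map_smul' c x := by
    refine Prod.ext ?_ ?_ <;> · dsimp; module
  left_inv yz := by
    refine Prod.ext ?_ ?_ <;> · dsimp; match_scalars <;> field_simp <;> ring
  right_inv x := by
    refine Prod.ext ?_ ?_ <;> · dsimp; match_scalars <;> field_simp <;> ring

lemma Mequiv_apply (a b : ℝ) (hd : a^2 + b^2 ≠ 0)
    (yz : EuclideanSpace ℝ (Fin k) × EuclideanSpace ℝ (Fin k)) :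
    Mequiv a b hd yz
      = ((a^2+b^2)⁻¹ • (a • yz.1 - b • yz.2), (a^2+b^2)⁻¹ • (b • yz.1 + a • yz.2)) := rfl

lemma prod_rpow_sum {ι : Type*} (s : Finset ι) (x : ENNReal) (hx0 : x ≠ 0) (hxt : x ≠ ⊤)
    (f : ι → ℝ) : ∏ j ∈ s, x ^ f j = x ^ (∑ j ∈ s, f j) := by
  classical
  induction s using Finset.induction_on with
  | empty => simp
  | insert _ _ hni ih =>
    rw [Finset.prod_insert hni, Finset.sum_insert hni, ih, ENNReal.rpow_add _ _ hx0 hxt]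

end SubspaceAux

open SubspaceAux

set_option maxHeartbeats 2000000

/-- Subspace necessity: the weighted Brascamp–Lieb estimate forces
`∑_{j≠ℓ} (1/p_j + λ_j/k) ≥ 1` for every `ℓ`. -/
theorem subspace_necessity (k N : ℕ) (hk : 1 ≤ k) (v : Fin N → ℝ × ℝ) (hv : ∀ j, v j ≠ 0)
    (hind : ∀ i j, i ≠ j → (v i).1 * (v j).2 - (v i).2 * (v j).1 ≠ 0)
    (p : Fin N → ENNReal) (hp : ∀ j, 1 ≤ p j) (lam : Fin N → ℝ)
    (C : ENNReal) (hC : C ≠ ⊤)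
    (hbound : ∀ f : Fin N → (EuclideanSpace ℝ (Fin k) → ENNReal), (∀ j, Measurable (f j)) →
      (∫⁻ x : EuclideanSpace ℝ (Fin k) × EuclideanSpace ℝ (Fin k),
          ∏ j, f j (dotVec (v j) x)) ≤
        C * ∏ j, lpNorm (fun t => ENNReal.ofReal (‖t‖ ^ lam j) * f j t) (p j)) :
    ∀ ℓ, 1 ≤ ∑ j ∈ Finset.univ.erase ℓ, ((1 / p j).toReal + lam j / (k : ℝ)) := by
  intro ℓ
  by_contra hcon
  push_neg at hcon
  have hk0 : (0:ℝ) < (k:ℝ) := by exact_mod_cast hk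
  set a : ℝ := (v ℓ).1 with ha
  set b : ℝ := (v ℓ).2 with hb
  have hd : a^2 + b^2 ≠ 0 := by
    intro h
    have ha0 : a = 0 := by nlinarith [sq_nonneg a, sq_nonneg b]
    have hb0 : b = 0 := by nlinarith [sq_nonneg a, sq_nonneg b]
    exact hv ℓ (Prod.ext_iff.mpr ⟨ha0, hb0⟩)
  set M := Mequiv (k := k) a b hd with hMdef
  set α : Fin N → ℝ := fun j => ((v j).1 * a + (v j).2 * b) / (a^2 + b^2) with hα
  set β : Fin N → ℝ := fun j => ((v j).2 * a - (v j).1 * b) / (a^2 + b^2) with hβdef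
  have hβ : ∀ j, j ≠ ℓ → β j ≠ 0 := by
    intro j hj
    have := hind j ℓ hj
    exact div_ne_zero (by intro h0; apply this; linarith) hd
  have hM : ∀ j (y z : EuclideanSpace ℝ (Fin k)),
      dotVec (v j) (M (y, z)) = α j • y + β j • z := by
    intro j y z
    rw [hMdef, Mequiv_apply]
    show (v j).1 • ((a^2+b^2)⁻¹ • (a • y - b • z)) +
      (v j).2 • ((a^2+b^2)⁻¹ • (b • y + a • z)) = α j • y + β j • z
    rw [hα, hβdef]
    match_scalars <;> (field_simp; try ring)
  have hMℓ : ∀ (y z : EuclideanSpace ℝ (Fin k)), dotVec (v ℓ) (M (y, z)) = y := by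
    intro y z
    rw [hM ℓ y z]
    have h1 : α ℓ = 1 := by
      rw [hα]; dsimp only; rw [← ha, ← hb, div_eq_one_iff_eq hd]; ring
    have h2 : β ℓ = 0 := by
      rw [hβdef]; dsimp only; rw [← ha, ← hb, div_eq_zero_iff]; left; ring
    rw [h1, h2, one_smul, zero_smul, add_zero]
  set W : ℝ := (volume (Metric.ball (0 : EuclideanSpace ℝ (Fin k)) 1)).toReal with hW
  have hW0 : 0 ≤ W := ENNReal.toReal_nonneg
  set q : Fin N → ℝ := fun j => (1 / p j).toReal with hq
  have hq0 : ∀ j, 0 ≤ q j := fun j => ENNReal.toReal_nonneg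
  set aa : Fin N → ℝ := fun j => if j = ℓ then 1 else |β j| / 2 with haa
  set bb : Fin N → ℝ := fun j => if j = ℓ then 2 else 2 * (|α j| + |β j|) with hbb
  have haa0 : ∀ j, 0 < aa j := by
    intro j; rw [haa]; dsimp only
    split
    · norm_num
    · next h => have := hβ j h; positivity
  have haabb : ∀ j, aa j ≤ bb j := by
    intro j; rw [haa, hbb]; dsimp only
    split
    · norm_num
    · have h1 : 0 ≤ |α j| := abs_nonneg _
      have h2 : 0 ≤ |β j| := abs_nonneg _
      linarith
  have hbb0 : ∀ j, 0 < bb j := fun j => lt_of_lt_of_le (haa0 j) (haabb j)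
  set G : Fin N → ℝ := fun j => max (aa j ^ lam j) (bb j ^ lam j) * ((bb j)^k * W) ^ q j with hG
  have hG0 : ∀ j, 0 ≤ G j := by
    intro j; rw [hG]; dsimp only
    have := Real.rpow_nonneg (haa0 j).le (lam j)
    have : (0:ℝ) ≤ max (aa j ^ lam j) (bb j ^ lam j) := le_trans this (le_max_left _ _)
    positivity
  set E : ℝ := ∑ j ∈ Finset.univ.erase ℓ, (lam j + k * q j) with hE
  have hEk : E < k := by
    have : E = k * ∑ j ∈ Finset.univ.erase ℓ, ((1 / p j).toReal + lam j / (k : ℝ)) := by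
      rw [hE, Finset.mul_sum]
      refine Finset.sum_congr rfl fun j _ => ?_
      rw [hq]; dsimp only; rw [one_div, ENNReal.toReal_inv]
      field_simp
      ring
    rw [this]
    calc (k:ℝ) * ∑ j ∈ Finset.univ.erase ℓ, ((1 / p j).toReal + lam j / (k : ℝ))
        < k * 1 := by exact mul_lt_mul_of_pos_left hcon hk0
      _ = k := mul_one _
  -- the annulus A and its volume
  set A : Set (EuclideanSpace ℝ (Fin k)) := {y | 1 ≤ ‖y‖ ∧ ‖y‖ ≤ 2} with hA
  have hAmeas : MeasurableSet A :=
    (measurableSet_le measurable_const measurable_norm).inter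
      (measurableSet_le measurable_norm measurable_const)
  have hA0 : volume A ≠ 0 := by
    have hO : IsOpen {y : EuclideanSpace ℝ (Fin k) | 1 < ‖y‖ ∧ ‖y‖ < 2} := by
      have : {y : EuclideanSpace ℝ (Fin k) | 1 < ‖y‖ ∧ ‖y‖ < 2}
          = (fun y : EuclideanSpace ℝ (Fin k) => ‖y‖) ⁻¹' (Set.Ioo 1 2) := rfl
      rw [this]
      exact isOpen_Ioo.preimage continuous_norm
    have hne : {y : EuclideanSpace ℝ (Fin k) | 1 < ‖y‖ ∧ ‖y‖ < 2}.Nonempty := by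
      refine ⟨EuclideanSpace.single ⟨0, hk⟩ (3/2 : ℝ), ?_⟩
      constructor <;> · rw [EuclideanSpace.norm_single]; norm_num
    have hpos := hO.measure_pos volume hne
    have hsub : {y : EuclideanSpace ℝ (Fin k) | 1 < ‖y‖ ∧ ‖y‖ < 2} ⊆ A :=
      fun y hy => ⟨hy.1.le, hy.2.le⟩
    exact (lt_of_lt_of_le hpos (measure_mono hsub)).ne'
  have hAtop : volume A ≠ ⊤ := by
    refine (lt_of_le_of_lt (measure_mono ?_) (measure_closedBall_lt_top
      (x := (0 : EuclideanSpace ℝ (Fin k))) (r := 2))).ne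
    intro y hy
    simpa [Metric.mem_closedBall, dist_zero_right] using hy.2
  set detM : ℝ := |LinearMap.det (M : (EuclideanSpace ℝ (Fin k) × EuclideanSpace ℝ (Fin k)) →ₗ[ℝ]
      (EuclideanSpace ℝ (Fin k) × EuclideanSpace ℝ (Fin k)))| with hdetM
  have hdet0 : 0 < detM := by
    rw [hdetM]
    exact abs_pos.mpr (LinearEquiv.isUnit_det' M).ne_zero
  set P : ENNReal := ENNReal.ofReal detM * (volume A * volume A) with hP
  have hP0 : P ≠ 0 := by
    rw [hP]
    simp only [ne_eq, mul_eq_zero, ENNReal.ofReal_eq_zero, not_or]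
    exact ⟨by linarith, hA0, hA0⟩
  have hPtop : P ≠ ⊤ := by
    rw [hP]
    exact ENNReal.mul_ne_top ENNReal.ofReal_ne_top (ENNReal.mul_ne_top hAtop hAtop)
  set Cg : ENNReal := C * ∏ j, ENNReal.ofReal (G j) with hCg
  have hCgtop : Cg ≠ ⊤ := by
    rw [hCg]
    exact ENNReal.mul_ne_top hC (by
      refine (ENNReal.prod_lt_top ?_).ne
      intro j _
      exact ENNReal.ofReal_lt_top)
  set δ : ℝ := (k:ℝ) - E with hδdef
  have hδ : 0 < δ := by rw [hδdef]; linarith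
  set Qr : ℝ := (Cg / P).toReal with hQr
  have hQr0 : 0 ≤ Qr := ENNReal.toReal_nonneg
  set R : ℝ := max 1 (max (∑ j ∈ Finset.univ.erase ℓ, 4 * |α j| / |β j|) ((Qr+1) ^ (1/δ)))
    with hRdef
  have hR1 : (1:ℝ) ≤ R := le_max_left _ _
  have hR0 : (0:ℝ) < R := by linarith
  have hRβ : ∀ j, j ≠ ℓ → 4 * |α j| ≤ R * |β j| := by
    intro j hj
    have hβj : 0 < |β j| := abs_pos.mpr (hβ j hj)
    have h1 : 4 * |α j| / |β j| ≤ R := by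
      refine le_trans ?_ (le_trans (le_max_left _ _) (le_max_right _ _))
      refine Finset.single_le_sum (f := fun j => 4 * |α j| / |β j|) ?_ ?_
      · intro i _; positivity
      · exact Finset.mem_erase.mpr ⟨hj, Finset.mem_univ j⟩
    calc 4 * |α j| = (4 * |α j| / |β j|) * |β j| := by field_simp
      _ ≤ R * |β j| := by exact mul_le_mul_of_nonneg_right h1 hβj.le
  set rr : Fin N → ℝ := fun j => if j = ℓ then 1 else R with hrr
  have hrr1 : ∀ j, 1 ≤ rr j := by
    intro j; rw [hrr]; dsimp only; split
    · exact le_rfl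
    · exact hR1
  set ann : Fin N → Set (EuclideanSpace ℝ (Fin k)) :=
    fun j => {t | aa j * rr j ≤ ‖t‖ ∧ ‖t‖ ≤ bb j * rr j} with hann
  set f : Fin N → EuclideanSpace ℝ (Fin k) → ENNReal := fun j => (ann j).indicator 1 with hf
  have hfmeas : ∀ j, Measurable (f j) := by
    intro j
    rw [hf]
    exact measurable_one.indicator ((measurableSet_le measurable_const measurable_norm).inter
      (measurableSet_le measurable_norm measurable_const))
  -- the test set S and its volume
  set S : Set (EuclideanSpace ℝ (Fin k) × EuclideanSpace ℝ (Fin k)) :=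
    M '' (A ×ˢ (R • A)) with hS
  have hRA : (R • A : Set (EuclideanSpace ℝ (Fin k))) = {y | R ≤ ‖y‖ ∧ ‖y‖ ≤ R * 2} := by
    ext z
    constructor
    · rintro ⟨w, hw, rfl⟩
      have : ‖R • w‖ = R * ‖w‖ := by
        rw [norm_smul, Real.norm_eq_abs, abs_of_pos hR0]
      refine ⟨?_, ?_⟩ <;> rw [this]
      · nlinarith [hw.1]
      · nlinarith [hw.2]
    · intro hz
      refine ⟨R⁻¹ • z, ⟨?_, ?_⟩, ?_⟩
      · rw [norm_smul, Real.norm_eq_abs, abs_of_pos (by positivity : (0:ℝ) < R⁻¹)]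
        rw [le_inv_mul_iff₀ hR0, mul_one]
        exact hz.1
      · rw [norm_smul, Real.norm_eq_abs, abs_of_pos (by positivity : (0:ℝ) < R⁻¹)]
        rw [inv_mul_le_iff₀ hR0]
        linarith [hz.2]
      · exact smul_inv_smul₀ hR0.ne' z
  have hprodmeas : MeasurableSet (A ×ˢ (R • A) :
      Set (EuclideanSpace ℝ (Fin k) × EuclideanSpace ℝ (Fin k))) := by
    refine hAmeas.prod ?_
    rw [hRA]
    exact (measurableSet_le measurable_const measurable_norm).inter
      (measurableSet_le measurable_norm measurable_const)
  have hSmeas : MeasurableSet S := by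
    rw [hS, LinearEquiv.image_eq_preimage_symm]
    have hcont : Continuous (M.symm) := LinearMap.continuous_of_finiteDimensional M.symm.toLinearMap
    exact hprodmeas.preimage hcont.measurable
  have hSvol : volume S = P * ENNReal.ofReal R ^ (k:ℝ) := by
    rw [hS]
    have h1 : volume ((M : (EuclideanSpace ℝ (Fin k) × EuclideanSpace ℝ (Fin k)) →ₗ[ℝ] (EuclideanSpace ℝ (Fin k) × EuclideanSpace ℝ (Fin k))) ''
        (A ×ˢ (R • A))) = ENNReal.ofReal detM * volume (A ×ˢ (R • A)) :=
      Measure.addHaar_image_linearMap _ _ _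
    rw [show (M '' (A ×ˢ (R • A))) = ((M : (EuclideanSpace ℝ (Fin k) ×
        EuclideanSpace ℝ (Fin k)) →ₗ[ℝ] (EuclideanSpace ℝ (Fin k) × EuclideanSpace ℝ (Fin k))) '' (A ×ˢ (R • A))) from rfl, h1]
    have h2 : volume ((A ×ˢ (R • A)) : Set (EuclideanSpace ℝ (Fin k) ×
        EuclideanSpace ℝ (Fin k))) = volume A * volume (R • A : Set (EuclideanSpace ℝ (Fin k))) := by
      rw [show (volume : Measure (EuclideanSpace ℝ (Fin k) × EuclideanSpace ℝ (Fin k)))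
        = (volume : Measure (EuclideanSpace ℝ (Fin k))).prod volume from rfl]
      exact Measure.prod_prod _ _
    rw [h2, Measure.addHaar_smul_of_nonneg _ hR0.le, finrank_euclideanSpace_fin,
      ENNReal.ofReal_pow hR0.le, ← ENNReal.rpow_natCast (ENNReal.ofReal R) k, hP]
    ring
  -- pointwise product equals 1 on S
  have hprod1 : ∀ x ∈ S, ∏ j, f j (dotVec (v j) x) = 1 := by
    rintro x ⟨⟨y, z⟩, hyz, rfl⟩
    have hy1 : 1 ≤ ‖y‖ := hyz.1.1
    have hy2 : ‖y‖ ≤ 2 := hyz.1.2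
    have hzRA := hyz.2
    rw [hRA] at hzRA
    have hz1 : R ≤ ‖z‖ := hzRA.1
    have hz2 : ‖z‖ ≤ R * 2 := hzRA.2
    refine Finset.prod_eq_one fun j _ => ?_
    rw [hf]; dsimp only
    by_cases hj : j = ℓ
    · subst hj
      rw [hMℓ y z]
      refine Set.indicator_of_mem ?_ 1
      rw [hann]; dsimp only
      rw [haa, hbb, hrr]; dsimp only
      rw [if_pos rfl, if_pos rfl, if_pos rfl]
      exact ⟨by rw [one_mul]; exact hy1, by rw [mul_one]; exact hy2⟩
    · rw [hM j y z]
      refine Set.indicator_of_mem ?_ 1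
      rw [hann]; dsimp only
      rw [haa, hbb, hrr]; dsimp only
      rw [if_neg hj, if_neg hj, if_neg hj]
      have hβj : 0 < |β j| := abs_pos.mpr (hβ j hj)
      have hαj : 0 ≤ |α j| := abs_nonneg _
      have h4 : 4 * |α j| ≤ R * |β j| := hRβ j hj
      have hn1 : ‖α j • y + β j • z‖ ≤ |α j| * ‖y‖ + |β j| * ‖z‖ := by
        refine le_trans (norm_add_le _ _) ?_
        rw [norm_smul, norm_smul, Real.norm_eq_abs, Real.norm_eq_abs]
      have hn2 : |β j| * ‖z‖ - |α j| * ‖y‖ ≤ ‖α j • y + β j • z‖ := by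
        have h := norm_sub_le (α j • y + β j • z) (α j • y)
        rw [add_sub_cancel_left] at h
        rw [norm_smul, norm_smul, Real.norm_eq_abs, Real.norm_eq_abs] at h
        linarith [norm_sub_le (α j • y + β j • z) (α j • y)]
      constructor
      · have hza : |β j| * R ≤ |β j| * ‖z‖ := by nlinarith
        have hya : |α j| * ‖y‖ ≤ |α j| * 2 := by nlinarith
        linarith
      · have hzb : |β j| * ‖z‖ ≤ |β j| * (R * 2) := by nlinarith
        have hyb : |α j| * ‖y‖ ≤ |α j| * 2 := by nlinarith
        have h2R : |α j| * 2 ≤ |α j| * (2 * R) :=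
          mul_le_mul_of_nonneg_left (by linarith) hαj
        nlinarith
  have hLHS : volume S ≤ ∫⁻ x, ∏ j, f j (dotVec (v j) x) := by
    rw [← lintegral_indicator_one hSmeas]
    refine lintegral_mono fun x => ?_
    by_cases hx : x ∈ S
    · rw [Set.indicator_of_mem hx, hprod1 x hx]
      exact le_of_eq (Pi.one_apply x)
    · rw [Set.indicator_of_notMem hx]
      exact zero_le
  have hRHS : ∀ j, lpNorm (fun t => ENNReal.ofReal (‖t‖ ^ lam j) * f j t) (p j)
      ≤ ENNReal.ofReal (G j) * ENNReal.ofReal R ^ (if j = ℓ then (0:ℝ) else lam j + k * q j) := by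
    intro j
    have hrrj0 : (0:ℝ) < rr j := lt_of_lt_of_le one_pos (hrr1 j)
    have h1 : 0 < aa j * rr j := mul_pos (haa0 j) hrrj0
    have h2 : aa j * rr j ≤ bb j * rr j := mul_le_mul_of_nonneg_right (haabb j) hrrj0.le
    have hb := lp_bound (k := k) (p j) (hp j) (lam j) (aa j * rr j) (bb j * rr j) h1 h2
    have hfun : (fun t : EuclideanSpace ℝ (Fin k) => ENNReal.ofReal (‖t‖ ^ lam j) * f j t)
        = (fun t : EuclideanSpace ℝ (Fin k) => ENNReal.ofReal (‖t‖ ^ lam j) *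
          Set.indicator {t : EuclideanSpace ℝ (Fin k) |
            aa j * rr j ≤ ‖t‖ ∧ ‖t‖ ≤ bb j * rr j} 1 t) := rfl
    rw [hfun]
    refine le_trans hb ?_
    by_cases hj : j = ℓ
    · rw [if_pos hj, ENNReal.rpow_zero, mul_one]
      refine ENNReal.ofReal_le_ofReal (le_of_eq ?_)
      have hrrℓ : rr j = 1 := by rw [hrr]; dsimp only; rw [if_pos hj]
      rw [hrrℓ, mul_one, mul_one, hG, hq]
    · rw [if_neg hj]
      have hrrR : rr j = R := by rw [hrr]; dsimp only; rw [if_neg hj]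
      rw [hrrR, ENNReal.ofReal_rpow_of_pos hR0, ← ENNReal.ofReal_mul (hG0 j)]
      refine ENNReal.ofReal_le_ofReal (le_of_eq ?_)
      rw [hG, hq]; dsimp only
      rw [Real.mul_rpow (haa0 j).le hR0.le, Real.mul_rpow (hbb0 j).le hR0.le,
        ← max_mul_of_nonneg _ _ (Real.rpow_nonneg hR0.le (lam j)), mul_pow,
        show bb j ^ k * R ^ k * W = bb j ^ k * W * R ^ k by ring,
        Real.mul_rpow (by positivity) (by positivity),
        ← Real.rpow_natCast R k, ← Real.rpow_mul hR0.le,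
        Real.rpow_add hR0]
      ring
  -- combine
  have hr0 : (ENNReal.ofReal R) ≠ 0 := by
    simp only [ne_eq, ENNReal.ofReal_eq_zero, not_le]
    exact hR0
  have hrtop : (ENNReal.ofReal R) ≠ ⊤ := ENNReal.ofReal_ne_top
  have key : P * ENNReal.ofReal R ^ (k:ℝ) ≤ Cg * ENNReal.ofReal R ^ E := by
    rw [← hSvol]
    refine le_trans hLHS (le_trans (hbound f hfmeas) ?_)
    rw [hCg, mul_assoc]
    refine mul_le_mul_right ?_ C
    calc ∏ j, lpNorm (fun t => ENNReal.ofReal (‖t‖ ^ lam j) * f j t) (p j)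
        ≤ ∏ j, (ENNReal.ofReal (G j) *
          ENNReal.ofReal R ^ (if j = ℓ then (0:ℝ) else lam j + k * q j)) :=
          Finset.prod_le_prod' fun j _ => hRHS j
      _ = (∏ j, ENNReal.ofReal (G j)) *
          ∏ j, ENNReal.ofReal R ^ (if j = ℓ then (0:ℝ) else lam j + k * q j) :=
          Finset.prod_mul_distrib
      _ = (∏ j, ENNReal.ofReal (G j)) * ENNReal.ofReal R ^ E := by
          rw [prod_rpow_sum _ _ hr0 hrtop]
          have hsum : ∑ j, (if j = ℓ then (0:ℝ) else lam j + ↑k * q j) = E := by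
            rw [hE, ← Finset.univ.add_sum_erase
              (fun j => if j = ℓ then (0:ℝ) else lam j + ↑k * q j) (Finset.mem_univ ℓ),
              if_pos rfl, zero_add]
            exact Finset.sum_congr rfl fun j hj => if_neg (Finset.mem_erase.mp hj).1
          rw [hsum]
  have hcancel : P * ENNReal.ofReal R ^ δ ≤ Cg := by
    have hE0 : (ENNReal.ofReal R) ^ E ≠ 0 := (ENNReal.rpow_pos (pos_iff_ne_zero.mpr hr0) hrtop).ne'
    have hEtop : (ENNReal.ofReal R) ^ E ≠ ⊤ := by
      intro h
      rcases ENNReal.rpow_eq_top_iff.mp h with ⟨h1, _⟩ | ⟨h1, _⟩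
      · exact hr0 h1
      · exact hrtop h1
    have h1 : ENNReal.ofReal R ^ (k:ℝ) = ENNReal.ofReal R ^ E * ENNReal.ofReal R ^ δ := by
      rw [← ENNReal.rpow_add _ _ hr0 hrtop, hδdef]
      congr 1
      ring
    rw [h1] at key
    have h2 : (P * ENNReal.ofReal R ^ δ) * ENNReal.ofReal R ^ E
        ≤ Cg * ENNReal.ofReal R ^ E := by
      calc (P * ENNReal.ofReal R ^ δ) * ENNReal.ofReal R ^ E
          = P * (ENNReal.ofReal R ^ E * ENNReal.ofReal R ^ δ) := by ring
        _ ≤ Cg * ENNReal.ofReal R ^ E := key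
    exact (ENNReal.mul_le_mul_iff_left hE0 hEtop).mp h2
  have hfinal : ENNReal.ofReal (Qr + 1) ≤ Cg / P := by
    refine le_trans ?_ ((ENNReal.le_div_iff_mul_le (Or.inl hP0) (Or.inl hPtop)).mpr
      (by rwa [mul_comm] at hcancel))
    have hRδ : Qr + 1 ≤ R ^ δ := by
      have h1 : ((Qr+1) ^ (1/δ)) ≤ R := le_trans (le_max_right _ _) (le_max_right _ _)
      have h2 : ((Qr+1) ^ (1/δ)) ^ δ ≤ R ^ δ :=
        Real.rpow_le_rpow (Real.rpow_nonneg (by linarith) _) h1 hδ.le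
      rwa [← Real.rpow_mul (by linarith : (0:ℝ) ≤ Qr + 1), one_div_mul_cancel hδ.ne',
        Real.rpow_one] at h2
    calc ENNReal.ofReal (Qr + 1) ≤ ENNReal.ofReal (R ^ δ) := ENNReal.ofReal_le_ofReal hRδ
      _ = ENNReal.ofReal R ^ δ := (ENNReal.ofReal_rpow_of_pos hR0).symm
  have hCgP : Cg / P ≠ ⊤ := (ENNReal.div_lt_top hCgtop hP0).ne
  have := ENNReal.toReal_mono hCgP hfinal
  rw [ENNReal.toReal_ofReal (by linarith)] at this
  rw [← hQr] at this
  linarith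
end

section
/- (Weight-sum necessity) Let v₁,…,v_N ∈ ℝ² be nonzero, pairwise linearly independent, and Λ as above. If Λ(f₁,…,f_N) ≤ C ∏_j ‖ |·|^{λ_j} f_j ‖_{L^{p_j}(ℝ^k)} holds for all nonnegative measurable f_j with C finite and 1/p_j ∈ [0,1], then ∑_{j≠ℓ} λ_j ≥ 0 for every ℓ = 1,…,N. -/
open MeasureTheory Metric Set Filter

lemma lpNorm_le_of_le_indicator {k : ℕ} {S : Set (EuclideanSpace ℝ (Fin k))}
    (hS : MeasurableSet S) {c : ENNReal} {f : EuclideanSpace ℝ (Fin k) → ENNReal}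
    (hf : ∀ t, f t ≤ S.indicator (fun _ => c) t) {p : ENNReal} (hp : 1 ≤ p) :
    lpNorm f p ≤ c * max 1 (volume S) := by
  unfold _root_.lpNorm
  split_ifs with h
  · refine le_trans (essSup_le_of_ae_le c ?_) ?_
    · exact Filter.Eventually.of_forall fun t =>
        (hf t).trans (by by_cases ht : t ∈ S <;> simp [ht])
    · calc c = c * 1 := (mul_one c).symm
        _ ≤ c * max 1 (volume S) := mul_le_mul_right (le_max_left _ _) c
  · have hp0 : p ≠ 0 := fun h0 => by simp [h0] at hp
    have hpr : 0 < p.toReal := ENNReal.toReal_pos hp0 h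
    have hpr1 : 1 ≤ p.toReal := by
      have := ENNReal.toReal_mono h hp
      simpa using this
    have step1 : (∫⁻ x, f x ^ p.toReal) ≤ c ^ p.toReal * volume S := by
      rw [← lintegral_indicator_const hS]
      refine lintegral_mono fun t => ?_
      by_cases ht : t ∈ S
      · have h1 : f t ≤ c := (hf t).trans_eq (by simp [ht])
        simpa [ht] using ENNReal.rpow_le_rpow h1 hpr.le
      · have h0 : f t = 0 := le_antisymm (by simpa [ht] using hf t) zero_le
        simp [h0, ht, ENNReal.zero_rpow_of_pos hpr]
    calc (∫⁻ x, f x ^ p.toReal) ^ (1 / p.toReal)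
        ≤ (c ^ p.toReal * volume S) ^ (1 / p.toReal) :=
          ENNReal.rpow_le_rpow step1 (by positivity)
      _ = c * (volume S) ^ (1 / p.toReal) := by
          rw [ENNReal.mul_rpow_of_nonneg _ _ (by positivity), ← ENNReal.rpow_mul,
            mul_one_div_cancel hpr.ne', ENNReal.rpow_one]
      _ ≤ c * max 1 (volume S) := by
          refine mul_le_mul_right ?_ c
          rcases le_total (volume S) 1 with hv | hv
          · exact le_max_of_le_left (ENNReal.rpow_le_one hv (by positivity))
          · refine le_max_of_le_right ?_
            calc (volume S) ^ (1 / p.toReal) ≤ (volume S) ^ (1 : ℝ) :=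
                ENNReal.rpow_le_rpow_of_exponent_le hv
                  (by rw [div_le_one hpr]; exact hpr1)
              _ = volume S := ENNReal.rpow_one _


set_option maxHeartbeats 2000000 in
/-- Weight-sum necessity: the weighted Brascamp–Lieb estimate forces
`∑_{j≠ℓ} λ_j ≥ 0` for every `ℓ`. -/
theorem weight_sum_necessity (k N : ℕ) (hk : 1 ≤ k) (v : Fin N → ℝ × ℝ) (hv : ∀ j, v j ≠ 0)
    (hind : ∀ i j, i ≠ j → (v i).1 * (v j).2 - (v i).2 * (v j).1 ≠ 0)
    (p : Fin N → ENNReal) (hp : ∀ j, 1 ≤ p j) (lam : Fin N → ℝ)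
    (C : ENNReal) (hC : C ≠ ⊤)
    (hbound : ∀ f : Fin N → (EuclideanSpace ℝ (Fin k) → ENNReal), (∀ j, Measurable (f j)) →
      (∫⁻ x : EuclideanSpace ℝ (Fin k) × EuclideanSpace ℝ (Fin k),
          ∏ j, f j (dotVec (v j) x)) ≤
        C * ∏ j, lpNorm (fun t => ENNReal.ofReal (‖t‖ ^ lam j) * f j t) (p j)) :
    ∀ ℓ, 0 ≤ ∑ j ∈ Finset.univ.erase ℓ, lam j := by
  intro ℓ
  by_contra hcon
  push_neg at hcon
  set s : ℝ := ∑ j ∈ Finset.univ.erase ℓ, lam j with hs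
  have hslt : s < 0 := hcon
  -- the unit vector e
  set e : EuclideanSpace ℝ (Fin k) := EuclideanSpace.single ⟨0, hk⟩ (1 : ℝ) with he_def
  have he : ‖e‖ = 1 := by simp [he_def, EuclideanSpace.norm_single]
  -- structural constants
  have hnv : 0 < (v ℓ).1 ^ 2 + (v ℓ).2 ^ 2 := by
    rcases eq_or_ne (v ℓ).1 0 with h1 | h1
    · have h2 : (v ℓ).2 ≠ 0 := by
        intro h2; exact hv ℓ (Prod.ext h1 h2)
      positivity
    · positivity
  set u1 : ℝ := -(v ℓ).2 with hu1
  set u2 : ℝ := (v ℓ).1 with hu2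
  set b1 : ℝ := (3 / 2) / ((v ℓ).1 ^ 2 + (v ℓ).2 ^ 2) * (v ℓ).1 with hb1
  set b2 : ℝ := (3 / 2) / ((v ℓ).1 ^ 2 + (v ℓ).2 ^ 2) * (v ℓ).2 with hb2
  set a : Fin N → ℝ := fun j => (v j).1 * u1 + (v j).2 * u2 with ha_def
  set c : Fin N → ℝ := fun j => (v j).1 * b1 + (v j).2 * b2 with hc_def
  have haℓ : a ℓ = 0 := by simp only [ha_def, hu1, hu2]; ring
  have hcℓ : c ℓ = 3 / 2 := by
    simp only [hc_def, hb1, hb2]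
    have key : (v ℓ).1 ^ 2 * ((v ℓ).1 ^ 2 + (v ℓ).2 ^ 2)⁻¹
        + (v ℓ).2 ^ 2 * ((v ℓ).1 ^ 2 + (v ℓ).2 ^ 2)⁻¹ = 1 := by
      rw [← add_mul]; exact mul_inv_cancel₀ hnv.ne'
    linear_combination (3 / 2 : ℝ) * key
  have haj : ∀ j, j ≠ ℓ → a j ≠ 0 := by
    intro j hj h0
    apply hind j ℓ hj
    simp only [ha_def, hu1, hu2] at h0
    linarith
  -- the small radius δ
  set W : ℝ := ∑ j, (|(v j).1| + |(v j).2|) with hW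
  have hWnn : 0 ≤ W := Finset.sum_nonneg fun j _ => by positivity
  set δ : ℝ := (2 * (W + 1))⁻¹ with hδdef
  have hδ : 0 < δ := by rw [hδdef]; positivity
  have hδle : ∀ j, (|(v j).1| + |(v j).2|) * δ ≤ 1 / 2 := by
    intro j
    have h1 : (|(v j).1| + |(v j).2|) ≤ W :=
      Finset.single_le_sum (f := fun j => (|(v j).1| + |(v j).2|))
        (fun i _ => by positivity) (Finset.mem_univ j)
    have h2 : (W + 1) * δ = 1 / 2 := by
      rw [hδdef]; field_simp
    have h3 : (|(v j).1| + |(v j).2|) * δ ≤ (W + 1) * δ := by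
      apply mul_le_mul_of_nonneg_right (by linarith) hδ.le
    linarith
  -- annulus and constants
  set Sℓ : Set (EuclideanSpace ℝ (Fin k)) := {t | 1 ≤ ‖t‖ ∧ ‖t‖ ≤ 2} with hSℓ_def
  have hSℓmeas : MeasurableSet Sℓ := by
    have : Sℓ = {t | 1 ≤ ‖t‖} ∩ {t | ‖t‖ ≤ 2} := rfl
    rw [this]
    exact (measurableSet_le measurable_const measurable_norm).inter
      (measurableSet_le measurable_norm measurable_const)
  have hSℓfin : volume Sℓ ≠ ⊤ := by
    have hsub : Sℓ ⊆ closedBall (0 : EuclideanSpace ℝ (Fin k)) 2 := fun t ht =>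
      mem_closedBall_zero_iff.mpr ht.2
    exact ne_top_of_le_ne_top (measure_closedBall_lt_top
      (x := (0 : EuclideanSpace ℝ (Fin k))) (r := 2)).ne (measure_mono hsub)
  set K : Fin N → ℝ := fun j => max ((|a j| / 2) ^ lam j) ((2 * |a j|) ^ lam j) with hK
  have hKnn : ∀ j, 0 ≤ K j := fun j =>
    le_max_of_le_left (Real.rpow_nonneg (by positivity) _)
  set Vcb : ENNReal := volume (closedBall (0 : EuclideanSpace ℝ (Fin k)) 1) with hVcb
  have hVcbfin : Vcb ≠ ⊤ := measure_closedBall_lt_top.ne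
  set cl : ENNReal := ENNReal.ofReal (max 1 (2 ^ lam ℓ)) * max 1 (volume Sℓ) with hcl
  set D : ENNReal :=
    C * (cl * ∏ j ∈ Finset.univ.erase ℓ, (ENNReal.ofReal (K j) * max 1 Vcb)) with hD
  have hDfin : D ≠ ⊤ := by
    rw [hD]
    refine ENNReal.mul_ne_top hC (ENNReal.mul_ne_top ?_ ?_)
    · rw [hcl]
      exact ENNReal.mul_ne_top ENNReal.ofReal_ne_top
        (by simp [max_eq_top, hSℓfin])
    · refine ENNReal.prod_ne_top fun j _ => ?_
      exact ENNReal.mul_ne_top ENNReal.ofReal_ne_top (by simp [max_eq_top, hVcbfin])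
  -- the ball volume
  set κ : ENNReal := volume (ball (0 : EuclideanSpace ℝ (Fin k)) δ) with hκ
  have hκpos : 0 < κ := measure_ball_pos _ _ hδ
  have hκκpos : (0 : ENNReal) < κ * κ := ENNReal.mul_pos hκpos.ne' hκpos.ne'
  -- choose R large
  set R₀ : ℝ := 1 + ∑ j, 2 * (|c j| + 1) / |a j| with hR₀
  have hR₀1 : 1 ≤ R₀ := by
    rw [hR₀]
    have : (0:ℝ) ≤ ∑ j, 2 * (|c j| + 1) / |a j| :=
      Finset.sum_nonneg fun j _ => by positivity
    linarith
  have htend : Tendsto (fun R : ℝ => D * ENNReal.ofReal (R ^ s)) atTop (nhds 0) := by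
    have h1 : Tendsto (fun R : ℝ => R ^ s) atTop (nhds 0) := by
      have := tendsto_rpow_neg_atTop (y := -s) (by linarith)
      simpa using this
    have h2 := ENNReal.tendsto_ofReal h1
    have h3 := ENNReal.Tendsto.const_mul (a := D) (by simpa using h2) (Or.inr hDfin)
    simpa using h3
  obtain ⟨R, hRge, hRlt⟩ :=
    ((eventually_ge_atTop R₀).and (htend.eventually_lt_const hκκpos)).exists
  have hR1 : 1 ≤ R := le_trans hR₀1 hRge
  have hR0 : 0 < R := by linarith
  -- the test sets and functions
  set xc : EuclideanSpace ℝ (Fin k) × EuclideanSpace ℝ (Fin k) :=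
    ((R * u1 + b1) • e, (R * u2 + b2) • e) with hxc
  set S : Fin N → Set (EuclideanSpace ℝ (Fin k)) := fun j =>
    if j = ℓ then Sℓ else closedBall ((R * a j + c j) • e) 1 with hSdef
  have hSmeas : ∀ j, MeasurableSet (S j) := by
    intro j
    rw [hSdef]
    rcases eq_or_ne j ℓ with h | h
    · simpa [h] using hSℓmeas
    · simp only [if_neg h]
      exact measurableSet_closedBall
  set f : Fin N → EuclideanSpace ℝ (Fin k) → ENNReal := fun j =>
    (S j).indicator (fun _ => 1) with hf
  have hfm : ∀ j, Measurable (f j) := fun j => measurable_const.indicator (hSmeas j)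
  -- centers
  have hdotc : ∀ j, dotVec (v j) xc = (R * a j + c j) • e := by
    intro j
    show (v j).1 • ((R * u1 + b1) • e) + (v j).2 • ((R * u2 + b2) • e) = _
    rw [smul_smul, smul_smul, ← add_smul]
    congr 1
    simp only [ha_def, hc_def]
    ring
  -- membership of the test box in the constraint set
  have hT : ∀ x : EuclideanSpace ℝ (Fin k) × EuclideanSpace ℝ (Fin k),
      x ∈ ball xc.1 δ ×ˢ ball xc.2 δ → ∀ j, dotVec (v j) x ∈ S j := by
    intro x hx j
    obtain ⟨hx1, hx2⟩ := hx
    have hdist : ‖dotVec (v j) x - (R * a j + c j) • e‖ ≤ 1 / 2 := by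
      rw [← hdotc j]
      have hsplit : dotVec (v j) x - dotVec (v j) xc
          = (v j).1 • (x.1 - xc.1) + (v j).2 • (x.2 - xc.2) := by
        show _ = _
        simp only [dotVec, smul_sub]
        abel
      rw [hsplit]
      have d1 : ‖x.1 - xc.1‖ ≤ δ := by
        rw [← dist_eq_norm]; exact (mem_ball.mp hx1).le
      have d2 : ‖x.2 - xc.2‖ ≤ δ := by
        rw [← dist_eq_norm]; exact (mem_ball.mp hx2).le
      calc ‖(v j).1 • (x.1 - xc.1) + (v j).2 • (x.2 - xc.2)‖
          ≤ ‖(v j).1 • (x.1 - xc.1)‖ + ‖(v j).2 • (x.2 - xc.2)‖ := norm_add_le _ _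
        _ = |(v j).1| * ‖x.1 - xc.1‖ + |(v j).2| * ‖x.2 - xc.2‖ := by
            rw [norm_smul, norm_smul, Real.norm_eq_abs, Real.norm_eq_abs]
        _ ≤ |(v j).1| * δ + |(v j).2| * δ := by
            exact add_le_add (mul_le_mul_of_nonneg_left d1 (abs_nonneg _))
              (mul_le_mul_of_nonneg_left d2 (abs_nonneg _))
        _ = (|(v j).1| + |(v j).2|) * δ := by ring
        _ ≤ 1 / 2 := hδle j
    rcases eq_or_ne j ℓ with hj | hj
    · subst hj
      have hcenter : R * a j + c j = 3 / 2 := by rw [haℓ, hcℓ]; ring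
      rw [hcenter] at hdist
      have hne : ‖(3 / 2 : ℝ) • e‖ = 3 / 2 := by
        rw [norm_smul, he, mul_one, Real.norm_eq_abs]
        norm_num
      have t1 : ‖(3 / 2 : ℝ) • e‖ - ‖dotVec (v j) x‖ ≤ ‖dotVec (v j) x - (3 / 2 : ℝ) • e‖ := by
        have := norm_sub_norm_le ((3 / 2 : ℝ) • e) (dotVec (v j) x)
        rwa [norm_sub_rev] at this
      have t2 : ‖dotVec (v j) x‖ - ‖(3 / 2 : ℝ) • e‖ ≤ ‖dotVec (v j) x - (3 / 2 : ℝ) • e‖ :=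
        norm_sub_norm_le _ _
      rw [hSdef]
      simp only [if_pos rfl]
      constructor
      · rw [hne] at t1; linarith
      · rw [hne] at t2; linarith
    · rw [hSdef]
      simp only [if_neg hj]
      exact mem_closedBall_iff_norm.mpr (hdist.trans (by norm_num))
  -- lower bound of the multilinear form
  have hLHS : κ * κ ≤ ∫⁻ x : EuclideanSpace ℝ (Fin k) × EuclideanSpace ℝ (Fin k),
      ∏ j, f j (dotVec (v j) x) := by
    have hTmeas : MeasurableSet (ball xc.1 δ ×ˢ ball xc.2 δ) :=
      measurableSet_ball.prod measurableSet_ball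
    have hvol : volume (ball xc.1 δ ×ˢ ball xc.2 δ) = κ * κ := by
      rw [Measure.volume_eq_prod, Measure.prod_prod,
        Measure.addHaar_ball_center volume xc.1, Measure.addHaar_ball_center volume xc.2,
        ← hκ]
    calc κ * κ = ∫⁻ x : EuclideanSpace ℝ (Fin k) × EuclideanSpace ℝ (Fin k),
          (ball xc.1 δ ×ˢ ball xc.2 δ).indicator (fun _ => (1 : ENNReal)) x := by
          rw [lintegral_indicator_const hTmeas, one_mul, hvol]
      _ ≤ _ := by
          refine lintegral_mono fun x => ?_
          by_cases hx : x ∈ ball xc.1 δ ×ˢ ball xc.2 δ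
          · rw [Set.indicator_of_mem hx]
            have hall : ∀ j ∈ Finset.univ, f j (dotVec (v j) x) = 1 := fun j _ => by
              rw [hf]
              exact Set.indicator_of_mem (hT x hx j) _
            rw [Finset.prod_congr rfl hall, Finset.prod_const_one]
          · simp [Set.indicator_of_notMem hx]
  -- upper bounds on the weighted norms, j ≠ ℓ
  have hRHSj : ∀ j ∈ Finset.univ.erase ℓ,
      lpNorm (fun t => ENNReal.ofReal (‖t‖ ^ lam j) * f j t) (p j)
        ≤ ENNReal.ofReal (K j * R ^ lam j) * max 1 Vcb := by
    intro j hj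
    have hjℓ : j ≠ ℓ := Finset.ne_of_mem_erase hj
    have hSj : S j = closedBall ((R * a j + c j) • e) 1 := by rw [hSdef]; simp [hjℓ]
    have habs : 0 < |a j| := abs_pos.mpr (haj j hjℓ)
    have hRa : 2 * (|c j| + 1) ≤ R * |a j| := by
      have hterm : 2 * (|c j| + 1) / |a j| ≤ ∑ i, 2 * (|c i| + 1) / |a i| :=
        Finset.single_le_sum (f := fun i => 2 * (|c i| + 1) / |a i|)
          (fun i _ => by positivity) (Finset.mem_univ j)
      have hRterm : 2 * (|c j| + 1) / |a j| ≤ R := by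
        rw [hR₀] at hRge
        linarith
      calc 2 * (|c j| + 1) = 2 * (|c j| + 1) / |a j| * |a j| := by field_simp
        _ ≤ R * |a j| := mul_le_mul_of_nonneg_right hRterm habs.le
    have hRa0 : 0 < R * |a j| := by positivity
    have hbnd : ∀ t ∈ S j, R * |a j| / 2 ≤ ‖t‖ ∧ ‖t‖ ≤ 2 * (R * |a j|) := by
      intro t ht
      rw [hSj, mem_closedBall_iff_norm] at ht
      have hcenter : ‖(R * a j + c j) • e‖ = |R * a j + c j| := by
        rw [norm_smul, he, mul_one, Real.norm_eq_abs]
      have habsR : |R * a j| = R * |a j| := by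
        rw [abs_mul, abs_of_pos hR0]
      have t1 : |R * a j| ≤ |R * a j + c j| + |c j| := by
        have := abs_add_le (R * a j + c j) (-(c j))
        simpa using this
      have t2 : |R * a j + c j| ≤ |R * a j| + |c j| := abs_add_le _ _
      have n1 : ‖(R * a j + c j) • e‖ - ‖t‖ ≤ ‖t - (R * a j + c j) • e‖ := by
        have := norm_sub_norm_le ((R * a j + c j) • e) t
        rwa [norm_sub_rev] at this
      have n2 : ‖t‖ - ‖(R * a j + c j) • e‖ ≤ ‖t - (R * a j + c j) • e‖ :=
        norm_sub_norm_le _ _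
      rw [hcenter] at n1 n2
      rw [habsR] at t1 t2
      constructor
      · linarith
      · linarith
    have hwt : ∀ t ∈ S j, ‖t‖ ^ lam j ≤ K j * R ^ lam j := by
      intro t ht
      obtain ⟨hlo, hhi⟩ := hbnd t ht
      rcases le_or_gt 0 (lam j) with hl | hl
      · calc ‖t‖ ^ lam j ≤ (2 * (R * |a j|)) ^ lam j :=
            Real.rpow_le_rpow (norm_nonneg t) hhi hl
          _ = (R * (2 * |a j|)) ^ lam j := by ring_nf
          _ = R ^ lam j * (2 * |a j|) ^ lam j := Real.mul_rpow hR0.le (by positivity)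
          _ ≤ K j * R ^ lam j := by
              rw [mul_comm]
              exact mul_le_mul_of_nonneg_right (le_max_right _ _)
                (Real.rpow_nonneg hR0.le _)
      · have hpos : 0 < R * |a j| / 2 := by positivity
        calc ‖t‖ ^ lam j ≤ (R * |a j| / 2) ^ lam j :=
            Real.rpow_le_rpow_of_nonpos hpos hlo hl.le
          _ = (R * (|a j| / 2)) ^ lam j := by ring_nf
          _ = R ^ lam j * (|a j| / 2) ^ lam j := Real.mul_rpow hR0.le (by positivity)
          _ ≤ K j * R ^ lam j := by
              rw [mul_comm]
              exact mul_le_mul_of_nonneg_right (le_max_left _ _)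
                (Real.rpow_nonneg hR0.le _)
    have hlp := lpNorm_le_of_le_indicator (S := S j) (hSmeas j)
      (c := ENNReal.ofReal (K j * R ^ lam j))
      (f := fun t => ENNReal.ofReal (‖t‖ ^ lam j) * f j t)
      (fun t => by
        by_cases ht : t ∈ S j
        · rw [hf]
          simp only [Set.indicator_of_mem ht, mul_one]
          exact ENNReal.ofReal_le_ofReal (hwt t ht)
        · rw [hf]
          simp [Set.indicator_of_notMem ht]) (hp j)
    refine hlp.trans (le_of_eq ?_)
    congr 1
    rw [hSj, Measure.addHaar_closedBall_center]
  -- upper bound for j = ℓ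
  have hRHSl : lpNorm (fun t => ENNReal.ofReal (‖t‖ ^ lam ℓ) * f ℓ t) (p ℓ) ≤ cl := by
    have hSl : S ℓ = Sℓ := by rw [hSdef]; simp
    have hwt : ∀ t ∈ Sℓ, ‖t‖ ^ lam ℓ ≤ max 1 (2 ^ lam ℓ) := by
      intro t ht
      rcases le_or_gt 0 (lam ℓ) with hl | hl
      · exact le_max_of_le_right (Real.rpow_le_rpow (norm_nonneg t) ht.2 hl)
      · refine le_max_of_le_left ?_
        have := Real.rpow_le_rpow_of_nonpos one_pos ht.1 hl.le
        rwa [Real.one_rpow] at this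
    have hlp := lpNorm_le_of_le_indicator (S := Sℓ) hSℓmeas
      (c := ENNReal.ofReal (max 1 (2 ^ lam ℓ)))
      (f := fun t => ENNReal.ofReal (‖t‖ ^ lam ℓ) * f ℓ t)
      (fun t => by
        by_cases ht : t ∈ Sℓ
        · simp only [hf, hSl]
          simp only [Set.indicator_of_mem ht, mul_one]
          exact ENNReal.ofReal_le_ofReal (hwt t ht)
        · simp only [hf, hSl]
          simp [Set.indicator_of_notMem ht]) (hp ℓ)
    exact hlp.trans_eq hcl.symm
  -- combine
  have hmain := hbound f hfm
  have h1 : ∏ j, lpNorm (fun t => ENNReal.ofReal (‖t‖ ^ lam j) * f j t) (p j)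
      ≤ cl * ∏ j ∈ Finset.univ.erase ℓ, (ENNReal.ofReal (K j * R ^ lam j) * max 1 Vcb) := by
    rw [← Finset.mul_prod_erase Finset.univ _ (Finset.mem_univ ℓ)]
    exact mul_le_mul' hRHSl (Finset.prod_le_prod' hRHSj)
  have h2 : ∏ j ∈ Finset.univ.erase ℓ, (ENNReal.ofReal (K j * R ^ lam j) * max 1 Vcb)
      = (∏ j ∈ Finset.univ.erase ℓ, (ENNReal.ofReal (K j) * max 1 Vcb))
        * ENNReal.ofReal (R ^ s) := by
    calc ∏ j ∈ Finset.univ.erase ℓ, (ENNReal.ofReal (K j * R ^ lam j) * max 1 Vcb)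
        = ∏ j ∈ Finset.univ.erase ℓ,
            ((ENNReal.ofReal (K j) * max 1 Vcb) * ENNReal.ofReal (R ^ lam j)) := by
          refine Finset.prod_congr rfl fun j _ => ?_
          rw [ENNReal.ofReal_mul (hKnn j)]
          ring
      _ = (∏ j ∈ Finset.univ.erase ℓ, (ENNReal.ofReal (K j) * max 1 Vcb))
            * ∏ j ∈ Finset.univ.erase ℓ, ENNReal.ofReal (R ^ lam j) :=
          Finset.prod_mul_distrib
      _ = _ := by
          congr 1
          rw [← ENNReal.ofReal_prod_of_nonneg (fun i _ => Real.rpow_nonneg hR0.le _)]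
          congr 1
          rw [hs]
          simp_rw [Real.rpow_def_of_pos hR0]
          rw [← Real.exp_sum, ← Finset.mul_sum]
  have hfinal : κ * κ ≤ D * ENNReal.ofReal (R ^ s) := by
    calc κ * κ ≤ C * ∏ j, lpNorm (fun t => ENNReal.ofReal (‖t‖ ^ lam j) * f j t) (p j) :=
        hLHS.trans hmain
      _ ≤ C * (cl * ∏ j ∈ Finset.univ.erase ℓ,
            (ENNReal.ofReal (K j * R ^ lam j) * max 1 Vcb)) := mul_le_mul_right h1 C
      _ = D * ENNReal.ofReal (R ^ s) := by
          rw [h2, hD]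
          ring
  exact absurd (hfinal.trans_lt hRlt) (lt_irrefl _)
end

section
/- (Interpolation-sum necessity) Let v₁,…,v_N ∈ ℝ² be nonzero, pairwise linearly independent, and Λ as above. If Λ(f₁,…,f_N) ≤ C ∏_j ‖ |·|^{λ_j} f_j ‖_{L^{p_j}(ℝ^k)} holds for all nonnegative measurable f_j with C finite, then ∑_{j=1}^N 1/p_j ≥ 1. -/
open MeasureTheory Pointwise

section AuxLemmas

private lemma aux_tsum_top {b : ℝ} (hb : b < 1) :
    ∑' m : ℕ, ENNReal.ofReal (((m : ℝ) + 1) ^ (-b)) = ⊤ := by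
  by_contra h
  have hs := ENNReal.summable_toReal h
  have hnn : ∀ m : ℕ, 0 ≤ ((m : ℝ) + 1) ^ (-b) := fun m =>
    Real.rpow_nonneg (by positivity) _
  have hs' : Summable (fun m : ℕ => ((m : ℝ) + 1) ^ (-b)) := by
    convert hs using 2 with m
    rw [ENNReal.toReal_ofReal (hnn m)]
  have hs2 : Summable (fun m : ℕ => ((m : ℕ) : ℝ) ^ (-b)) := by
    rw [← summable_nat_add_iff 1]
    convert hs' using 2 with m
    · rfl
    push_cast
    ring_nf
  rw [Real.summable_nat_rpow] at hs2
  linarith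

private lemma aux_tsum_ne_top {b : ℝ} (hb : 1 < b) :
    ∑' m : ℕ, ENNReal.ofReal (((m : ℝ) + 1) ^ (-b)) ≠ ⊤ := by
  have hs2 : Summable (fun m : ℕ => ((m : ℕ) : ℝ) ^ (-b)) :=
    Real.summable_nat_rpow.2 (by linarith)
  have hs' : Summable (fun m : ℕ => ((m : ℝ) + 1) ^ (-b)) := by
    have := (summable_nat_add_iff 1).2 hs2
    convert this using 2 with m
    · rfl
    push_cast
    ring_nf
  rw [← ENNReal.ofReal_tsum_of_nonneg (fun m => Real.rpow_nonneg (by positivity) _) hs']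
  exact ENNReal.ofReal_ne_top

private lemma aux_rpow_le_max {A B x l : ℝ} (hA : 0 < A) (h1 : A ≤ x) (h2 : x ≤ B) :
    x ^ l ≤ max (A ^ l) (B ^ l) := by
  rcases le_or_gt 0 l with hl | hl
  · exact le_max_of_le_right (Real.rpow_le_rpow (by linarith) h2 hl)
  · exact le_max_of_le_left (Real.rpow_le_rpow_of_nonpos hA h1 hl.le)

end AuxLemmas

set_option maxHeartbeats 2000000 in
/-- Interpolation-sum necessity: the weighted Brascamp–Lieb estimate forces
`∑_j 1/p_j ≥ 1`. -/
theorem interpolation_sum_necessity (k N : ℕ) (hk : 1 ≤ k) (v : Fin N → ℝ × ℝ) (hv : ∀ j, v j ≠ 0)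
    (hind : ∀ i j, i ≠ j → (v i).1 * (v j).2 - (v i).2 * (v j).1 ≠ 0)
    (p : Fin N → ENNReal) (hp : ∀ j, 1 ≤ p j) (lam : Fin N → ℝ)
    (C : ENNReal) (hC : C ≠ ⊤)
    (hbound : ∀ f : Fin N → (EuclideanSpace ℝ (Fin k) → ENNReal), (∀ j, Measurable (f j)) →
      (∫⁻ x : EuclideanSpace ℝ (Fin k) × EuclideanSpace ℝ (Fin k),
          ∏ j, f j (dotVec (v j) x)) ≤
        C * ∏ j, lpNorm (fun t => ENNReal.ofReal (‖t‖ ^ lam j) * f j t) (p j)) :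
    1 ≤ ∑ j, (1 / p j).toReal := by
  classical
  by_contra hcon
  push_neg at hcon
  have hkpos : (0:ℝ) < k := by exact_mod_cast hk
  haveI : Nonempty (Fin k) := ⟨⟨0, hk⟩⟩
  haveI hHaar : (volume :
      Measure (EuclideanSpace ℝ (Fin k) × EuclideanSpace ℝ (Fin k))).IsAddHaarMeasure :=
    MeasureTheory.Measure.prod.instIsAddHaarMeasure
      (volume : Measure (EuclideanSpace ℝ (Fin k)))
      (volume : Measure (EuclideanSpace ℝ (Fin k)))
  -- the `N = 0` case: the estimate itself is contradictory
  rcases Nat.eq_zero_or_pos N with hN0 | hN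
  · subst hN0
    have h := hbound (fun _ _ => 1) (fun _ => measurable_const)
    simp only [Finset.univ_eq_empty, Finset.prod_empty, mul_one, lintegral_one] at h
    rw [measure_univ_of_isAddLeftInvariant] at h
    exact hC (top_le_iff.1 h)
  -- exponents
  set r : Fin N → ℝ := fun j => (1 / p j).toReal with hr_def
  set σ : ℝ := ∑ j, r j with hσ_def
  have hr0 : ∀ j, 0 ≤ r j := fun j => ENNReal.toReal_nonneg
  have hσ0 : 0 ≤ σ := Finset.sum_nonneg fun j _ => hr0 j
  have hσ1 : σ < 1 := hcon
  set q : ℝ := if σ = 0 then 2 else (1 + σ⁻¹) / 2 with hq_def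
  have hq1 : 1 < q := by
    rw [hq_def]
    split_ifs with h
    · norm_num
    · have hσpos : 0 < σ := lt_of_le_of_ne hσ0 (Ne.symm h)
      have : 1 < σ⁻¹ := (one_lt_inv₀ hσpos).2 hσ1
      linarith
  have hqσ : q * σ < 1 := by
    rw [hq_def]
    split_ifs with h
    · rw [h]; norm_num
    · have hσpos : 0 < σ := lt_of_le_of_ne hσ0 (Ne.symm h)
      have : σ⁻¹ * σ = 1 := inv_mul_cancel₀ (ne_of_gt hσpos)
      nlinarith
  set D : ℝ := 2 * k - k * σ - ∑ j, lam j with hD_def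
  set τ : ℝ := if 0 ≤ D then 4 else 4⁻¹ with hτ_def
  have hτ0 : 0 < τ := by rw [hτ_def]; split_ifs <;> norm_num
  have hτD : 1 ≤ τ ^ D := by
    rw [hτ_def]
    split_ifs with h
    · calc (1:ℝ) = (4:ℝ) ^ (0:ℝ) := (Real.rpow_zero 4).symm
        _ ≤ (4:ℝ) ^ D := Real.rpow_le_rpow_of_exponent_le (by norm_num) h
    · push_neg at h
      rw [Real.inv_rpow (by norm_num), ← Real.rpow_neg (by norm_num)]
      calc (1:ℝ) = (4:ℝ) ^ (0:ℝ) := (Real.rpow_zero 4).symm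
        _ ≤ (4:ℝ) ^ (-D) := Real.rpow_le_rpow_of_exponent_le (by norm_num) (by linarith)
  set μf : Fin N → ℝ := fun j => k * r j + lam j + D / N with hμ_def
  have hNne : (N:ℝ) ≠ 0 := by positivity
  have hμsum : ∑ j, μf j = 2 * k := by
    rw [hμ_def]
    simp only [Finset.sum_add_distrib, ← Finset.mul_sum, Finset.sum_const, Finset.card_univ,
      Fintype.card_fin, nsmul_eq_mul]
    rw [← hσ_def]
    field_simp
    ring
  set ρ : ℕ → ℝ := fun m => τ ^ ((m:ℝ) + 1) with hρ_def
  have hρ0 : ∀ m, 0 < ρ m := fun m => Real.rpow_pos_of_pos hτ0 _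
  have hτ001 : (0:ℝ) < 4 := by norm_num
  have hτ004 : (0:ℝ) ≤ 4 := by norm_num
  have hτcase : τ = 4 ∨ τ = 4⁻¹ := by
    rw [hτ_def]; split_ifs
    · exact Or.inl rfl
    · exact Or.inr rfl
  have e4 : ∀ y : ℝ, (4⁻¹:ℝ) ^ y = 4 ^ (-y) := by
    intro y; rw [Real.inv_rpow hτ004, ← Real.rpow_neg hτ004]
  have hsep : ∀ m m' : ℕ, m < m' → 4 * ρ m ≤ ρ m' ∨ 4 * ρ m' ≤ ρ m := by
    intro m m' hmm
    have hcast : (m:ℝ) + 1 + 1 ≤ (m':ℝ) + 1 := by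
      have : (m:ℝ) + 1 ≤ m' := by exact_mod_cast Nat.succ_le_of_lt hmm
      linarith
    rcases hτcase with h | h
    · left
      show 4 * τ ^ ((m:ℝ) + 1) ≤ τ ^ ((m':ℝ) + 1)
      rw [h]
      calc (4:ℝ) * 4 ^ ((m:ℝ) + 1) = 4 ^ ((m:ℝ) + 1 + 1) := by
            rw [Real.rpow_add hτ001 ((m:ℝ) + 1) 1, Real.rpow_one]; ring
        _ ≤ 4 ^ ((m':ℝ) + 1) := Real.rpow_le_rpow_of_exponent_le (by norm_num) hcast
    · right
      show 4 * τ ^ ((m':ℝ) + 1) ≤ τ ^ ((m:ℝ) + 1)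
      rw [h, e4, e4]
      calc (4:ℝ) * 4 ^ (-((m':ℝ) + 1)) = 4 ^ (-((m':ℝ) + 1) + 1) := by
            rw [Real.rpow_add hτ001 (-((m':ℝ) + 1)) 1, Real.rpow_one]; ring
        _ ≤ 4 ^ (-((m:ℝ) + 1)) := Real.rpow_le_rpow_of_exponent_le (by norm_num) (by linarith)
  have hρD : ∀ (m : ℕ) (y : ℝ), y ≤ 0 → ρ m ^ (D * y) ≤ 1 := by
    intro m y hy
    show (τ ^ ((m:ℝ) + 1)) ^ (D * y) ≤ 1
    have : (τ ^ ((m:ℝ) + 1)) ^ (D * y) = (τ ^ D) ^ (((m:ℝ) + 1) * y) := by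
      rw [← Real.rpow_mul hτ0.le, ← Real.rpow_mul hτ0.le]
      ring_nf
    rw [this]
    exact Real.rpow_le_one_of_one_le_of_nonpos hτD
      (mul_nonpos_of_nonneg_of_nonpos (by positivity) hy)
  -- geometry
  have hT : (⋃ j, {t : ℝ | (v j).1 + (v j).2 * t = 0}).Finite := by
    apply Set.finite_iUnion
    intro j
    rcases eq_or_ne (v j).2 0 with h2 | h2
    · have h1 : (v j).1 ≠ 0 := by
        intro h1
        exact hv j (Prod.ext_iff.2 ⟨h1, h2⟩)
      convert Set.finite_empty
      ext t; simp [h2, h1]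
    · apply Set.Finite.subset (Set.finite_singleton (-(v j).1 / (v j).2))
      intro t ht
      simp only [Set.mem_setOf_eq] at ht
      simp only [Set.mem_singleton_iff]
      field_simp
      linarith
  obtain ⟨t₀, ht₀⟩ := (Set.Finite.infinite_compl hT).nonempty
  have ht0' : ∀ j, (v j).1 + (v j).2 * t₀ ≠ 0 := by
    intro j hzero
    exact ht₀ (Set.mem_iUnion.2 ⟨j, hzero⟩)
  set c : Fin N → ℝ := fun j => |(v j).1 + (v j).2 * t₀| with hc_def
  have hc : ∀ j, 0 < c j := fun j => abs_pos.2 (ht0' j)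
  set e : EuclideanSpace ℝ (Fin k) := EuclideanSpace.single ⟨0, hk⟩ 1 with he_def
  have he : ‖e‖ = 1 := by rw [he_def, EuclideanSpace.norm_single]; norm_num
  set x₀ : EuclideanSpace ℝ (Fin k) × EuclideanSpace ℝ (Fin k) := (e, t₀ • e) with hx₀_def
  have hdot_lin : ∀ (j : Fin N) (y : EuclideanSpace ℝ (Fin k) × EuclideanSpace ℝ (Fin k)) (s : ℝ),
      dotVec (v j) (s • y) = s • dotVec (v j) y := by
    intro j y s
    simp [dotVec, Prod.smul_fst, Prod.smul_snd, smul_smul, mul_comm, smul_add]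
  have hdx₀ : ∀ j, ‖dotVec (v j) x₀‖ = c j := by
    intro j
    have : dotVec (v j) x₀ = ((v j).1 + (v j).2 * t₀) • e := by
      simp [dotVec, hx₀_def, smul_smul, add_smul]
    rw [this, norm_smul, he, mul_one, Real.norm_eq_abs]
  set U : Set (EuclideanSpace ℝ (Fin k) × EuclideanSpace ℝ (Fin k)) :=
    {x | ∀ j, c j / 2 < ‖dotVec (v j) x‖ ∧ ‖dotVec (v j) x‖ < 2 * c j} with hU_def
  have hcont : ∀ j, Continuous fun x : EuclideanSpace ℝ (Fin k) × EuclideanSpace ℝ (Fin k) =>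
      ‖dotVec (v j) x‖ := by
    intro j
    exact ((continuous_fst.const_smul (v j).1).add (continuous_snd.const_smul (v j).2)).norm
  have hdotmeas : ∀ j, Measurable (fun x : EuclideanSpace ℝ (Fin k) × EuclideanSpace ℝ (Fin k) =>
      dotVec (v j) x) := by
    intro j
    exact ((continuous_fst.const_smul (v j).1).add (continuous_snd.const_smul (v j).2)).measurable
  have hUopen : IsOpen U := by
    have : U = ⋂ j, ({x | c j / 2 < ‖dotVec (v j) x‖} ∩ {x | ‖dotVec (v j) x‖ < 2 * c j}) := by
      ext x
      simp only [hU_def, Set.mem_setOf_eq, Set.mem_iInter, Set.mem_inter_iff]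
    rw [this]
    exact isOpen_iInter_of_finite fun j =>
      (isOpen_lt continuous_const (hcont j)).inter (isOpen_lt (hcont j) continuous_const)
  have hx₀U : x₀ ∈ U := by
    intro j
    have := hc j
    constructor <;> rw [hdx₀ j] <;> linarith
  obtain ⟨rad, hrad0, hball⟩ := Metric.isOpen_iff.1 hUopen x₀ hx₀U
  set S₀ : Set (EuclideanSpace ℝ (Fin k) × EuclideanSpace ℝ (Fin k)) := Metric.ball x₀ rad
    with hS₀_def
  have hS₀meas : MeasurableSet S₀ := measurableSet_ball
  have hS₀pos : 0 < volume S₀ := Metric.measure_ball_pos _ _ hrad0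
  have hS₀top : volume S₀ < ⊤ := measure_ball_lt_top
  set S : ℕ → Set (EuclideanSpace ℝ (Fin k) × EuclideanSpace ℝ (Fin k)) := fun m => ρ m • S₀
    with hS_def
  have hSmeas : ∀ m, MeasurableSet (S m) := by
    intro m
    exact hS₀meas.const_smul₀ (ρ m)
  have hfr : Module.finrank ℝ (EuclideanSpace ℝ (Fin k) × EuclideanSpace ℝ (Fin k)) = 2 * k := by
    simp [Module.finrank_prod, finrank_euclideanSpace]
    ring
  have hSvol : ∀ m, volume (S m) = ENNReal.ofReal (ρ m ^ (2 * k)) * volume S₀ := by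
    intro m
    rw [hS_def]
    rw [MeasureTheory.Measure.addHaar_smul volume]
    rw [hfr, abs_of_pos (pow_pos (hρ0 m) _)]
  have hSin : ∀ m x, x ∈ S m → ∀ j,
      ρ m * (c j / 2) < ‖dotVec (v j) x‖ ∧ ‖dotVec (v j) x‖ < ρ m * (2 * c j) := by
    intro m x hx j
    obtain ⟨y, hy, rfl⟩ := hx
    rw [hdot_lin, norm_smul, Real.norm_eq_abs, abs_of_pos (hρ0 m)]
    have h := hball hy j
    exact ⟨mul_lt_mul_of_pos_left h.1 (hρ0 m), mul_lt_mul_of_pos_left h.2 (hρ0 m)⟩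
  have hSdisj : ∀ m m' : ℕ, m ≠ m' → Disjoint (S m) (S m') := by
    intro m m' hne
    rw [Set.disjoint_left]
    intro x h1 h2
    have b1 := hSin m x h1 ⟨0, hN⟩
    have b2 := hSin m' x h2 ⟨0, hN⟩
    have hcj := hc ⟨0, hN⟩
    rcases Ne.lt_or_gt hne with hlt | hlt
    · rcases hsep m m' hlt with h4 | h4 <;> nlinarith [hρ0 m, hρ0 m']
    · rcases hsep m' m hlt with h4 | h4 <;> nlinarith [hρ0 m, hρ0 m']
  -- annuli and test functions
  set Ean : Fin N → ℕ → Set (EuclideanSpace ℝ (Fin k)) := fun j m =>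
    {t | ρ m * (c j / 2) ≤ ‖t‖ ∧ ‖t‖ < ρ m * (2 * c j)} with hEan_def
  have hEanmeas : ∀ j m, MeasurableSet (Ean j m) :=
    fun j m => (measurableSet_le measurable_const measurable_norm).inter
      (measurableSet_lt measurable_norm measurable_const)
  set a : Fin N → ℕ → ℝ := fun j m => ((m:ℝ) + 1) ^ (-(q * r j)) * ρ m ^ (-(μf j)) with ha_def
  have ha0 : ∀ j m, 0 < a j m := fun j m =>
    mul_pos (Real.rpow_pos_of_pos (by positivity) _) (Real.rpow_pos_of_pos (hρ0 m) _)
  set f : Fin N → EuclideanSpace ℝ (Fin k) → ENNReal := fun j t =>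
    ∑' m, (Ean j m).indicator (fun _ => ENNReal.ofReal (a j m)) t with hf_def
  have hfmeas : ∀ j, Measurable (f j) := fun j =>
    Measurable.ennreal_tsum fun m => measurable_const.indicator (hEanmeas j m)
  have hEandisj : ∀ (j : Fin N) t (m m' : ℕ), t ∈ Ean j m → t ∈ Ean j m' → m = m' := by
    intro j t m m' h1 h2
    by_contra hne
    have hcj := hc j
    obtain ⟨h11, h12⟩ := h1
    obtain ⟨h21, h22⟩ := h2
    rcases Ne.lt_or_gt hne with hlt | hlt
    · rcases hsep m m' hlt with h4 | h4 <;> nlinarith [hρ0 m, hρ0 m']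
    · rcases hsep m' m hlt with h4 | h4 <;> nlinarith [hρ0 m, hρ0 m']
  have hfval : ∀ j t m, t ∈ Ean j m → f j t = ENNReal.ofReal (a j m) := by
    intro j t m ht
    refine (tsum_eq_single m ?_).trans (Set.indicator_of_mem ht _)
    intro m' hm'
    apply Set.indicator_of_notMem
    intro ht'
    exact hm' (hEandisj j t m' m ht' ht)
  have hfzero : ∀ j t, (∀ m, t ∉ Ean j m) → f j t = 0 := by
    intro j t h
    have : ∀ m : ℕ, (Ean j m).indicator (fun _ => ENNReal.ofReal (a j m)) t = 0 :=
      fun m => Set.indicator_of_notMem (h m) _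
    simp only [hf_def, this, tsum_zero]
  have hfge : ∀ j t m, t ∈ Ean j m → ENNReal.ofReal (a j m) ≤ f j t := fun j t m ht =>
    le_trans (le_of_eq (Set.indicator_of_mem ht
      (fun _ => ENNReal.ofReal (a j m))).symm) (ENNReal.le_tsum m)
  have hSE : ∀ m x, x ∈ S m → ∀ j, dotVec (v j) x ∈ Ean j m := by
    intro m x hx j
    obtain ⟨h1, h2⟩ := hSin m x hx j
    exact ⟨h1.le, h2⟩
  -- the left-hand side diverges
  set F : EuclideanSpace ℝ (Fin k) × EuclideanSpace ℝ (Fin k) → ENNReal :=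
    fun x => ∏ j, f j (dotVec (v j) x) with hF_def
  have hFmeas : Measurable F :=
    Finset.measurable_prod _ fun j _ => (hfmeas j).comp (hdotmeas j)
  have hprod_id : ∀ m : ℕ, (∏ j, ENNReal.ofReal (a j m)) * volume (S m)
      = ENNReal.ofReal (((m:ℝ) + 1) ^ (-(q * σ))) * volume S₀ := by
    intro m
    rw [hSvol m, ← ENNReal.ofReal_prod_of_nonneg (fun j _ => (ha0 j m).le), ← mul_assoc,
      ← ENNReal.ofReal_mul (Finset.prod_nonneg fun j _ => (ha0 j m).le)]
    congr 2
    have h1 : ∏ j, a j m = ((m:ℝ) + 1) ^ (-(q * σ)) * ρ m ^ (-(2 * (k:ℝ))) := by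
      rw [ha_def, Finset.prod_mul_distrib,
        ← Real.rpow_sum_of_pos (by positivity : (0:ℝ) < (m:ℝ) + 1),
        ← Real.rpow_sum_of_pos (hρ0 m)]
      have hsum1 : ∑ j, -(q * r j) = -(q * σ) := by
        rw [hσ_def, Finset.mul_sum, Finset.sum_neg_distrib]
      have hsum2 : ∑ j, -(μf j) = -(2 * (k:ℝ)) := by
        rw [Finset.sum_neg_distrib, hμsum]
      rw [hsum1, hsum2]
    rw [h1]
    have h2 : (ρ m : ℝ) ^ (2 * k) = ρ m ^ (2 * (k:ℝ)) := by
      rw [← Real.rpow_natCast (ρ m) (2 * k)]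
      norm_num
    rw [h2, mul_assoc, ← Real.rpow_add (hρ0 m), neg_add_cancel, Real.rpow_zero, mul_one]
  have hkey : ∀ M : ℕ,
      ∑ m ∈ Finset.range M, ENNReal.ofReal (((m:ℝ) + 1) ^ (-(q * σ))) * volume S₀
        ≤ ∫⁻ x, F x := by
    intro M
    have step2 : ∫⁻ x in ⋃ m ∈ Finset.range M, S m, F x
        = ∑ m ∈ Finset.range M, ∫⁻ x in S m, F x :=
      lintegral_biUnion_finset (fun m _ m' _ hne => hSdisj m m' hne)
        (fun m _ => hSmeas m) F
    have step3 : ∀ m : ℕ, ENNReal.ofReal (((m:ℝ) + 1) ^ (-(q * σ))) * volume S₀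
        ≤ ∫⁻ x in S m, F x := by
      intro m
      have hlow : ∀ x ∈ S m, (∏ j, ENNReal.ofReal (a j m)) ≤ F x := by
        intro x hx
        exact Finset.prod_le_prod' fun j _ => hfge j _ m (hSE m x hx j)
      calc ENNReal.ofReal (((m:ℝ) + 1) ^ (-(q * σ))) * volume S₀
          = (∏ j, ENNReal.ofReal (a j m)) * volume (S m) := (hprod_id m).symm
        _ = ∫⁻ _ in S m, (∏ j, ENNReal.ofReal (a j m)) ∂volume := (setLIntegral_const _ _).symm
        _ ≤ ∫⁻ x in S m, F x := setLIntegral_mono hFmeas hlow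
    calc ∑ m ∈ Finset.range M, ENNReal.ofReal (((m:ℝ) + 1) ^ (-(q * σ))) * volume S₀
        ≤ ∑ m ∈ Finset.range M, ∫⁻ x in S m, F x := Finset.sum_le_sum fun m _ => step3 m
      _ = ∫⁻ x in ⋃ m ∈ Finset.range M, S m, F x := step2.symm
      _ ≤ ∫⁻ x, F x := setLIntegral_le_lintegral _ _
  have hLHStop : ∫⁻ x, F x = ⊤ := by
    rw [← top_le_iff]
    have h1 : (∑' m : ℕ, ENNReal.ofReal (((m:ℝ) + 1) ^ (-(q * σ))) * volume S₀) ≤ ∫⁻ x, F x := by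
      rw [ENNReal.tsum_eq_iSup_sum]
      apply iSup_le
      intro s
      obtain ⟨M, hM⟩ := s.exists_nat_subset_range
      exact le_trans (Finset.sum_le_sum_of_subset hM) (hkey M)
    have h2 : (∑' m : ℕ, ENNReal.ofReal (((m:ℝ) + 1) ^ (-(q * σ))) * volume S₀) = ⊤ := by
      rw [ENNReal.tsum_mul_right, aux_tsum_top hqσ, ENNReal.top_mul (ne_of_gt hS₀pos)]
    rw [← h2]
    exact h1
  -- the right-hand side is finite
  have hRHS : ∀ j, lpNorm (fun t => ENNReal.ofReal (‖t‖ ^ lam j) * f j t) (p j) ≠ ⊤ := by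
    intro j
    set Mj : ℝ := max ((c j / 2) ^ lam j) ((2 * c j) ^ lam j) with hMj_def
    have hMj0 : 0 < Mj := lt_max_of_lt_left (Real.rpow_pos_of_pos (by linarith [hc j]) _)
    have hwb : ∀ m t, t ∈ Ean j m → ‖t‖ ^ lam j ≤ ρ m ^ lam j * Mj := by
      intro m t ht
      obtain ⟨h1, h2⟩ := ht
      have hA : 0 < ρ m * (c j / 2) := by
        have := hc j
        have := hρ0 m
        positivity
      calc ‖t‖ ^ lam j
          ≤ max ((ρ m * (c j / 2)) ^ lam j) ((ρ m * (2 * c j)) ^ lam j) :=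
            aux_rpow_le_max hA h1 h2.le
        _ = ρ m ^ lam j * Mj := by
            rw [Real.mul_rpow (hρ0 m).le (by linarith [hc j]),
              Real.mul_rpow (hρ0 m).le (by linarith [hc j]), hMj_def,
              ← mul_max_of_nonneg _ _ (Real.rpow_nonneg (hρ0 m).le _)]
    rcases eq_or_ne (p j) ⊤ with hpt | hpt
    · -- `p j = ∞`
      have hrj : r j = 0 := by rw [hr_def]; simp [hpt]
      rw [_root_.lpNorm, if_pos hpt]
      have hbnd : ∀ t, ENNReal.ofReal (‖t‖ ^ lam j) * f j t ≤ ENNReal.ofReal Mj := by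
        intro t
        by_cases hex : ∃ m, t ∈ Ean j m
        · obtain ⟨m, hm⟩ := hex
          rw [hfval j t m hm, ← ENNReal.ofReal_mul (Real.rpow_nonneg (norm_nonneg t) _)]
          apply ENNReal.ofReal_le_ofReal
          have h1 : ‖t‖ ^ lam j * a j m ≤ ρ m ^ lam j * Mj * a j m :=
            mul_le_mul_of_nonneg_right (hwb m t hm) (ha0 j m).le
          have h2 : ρ m ^ lam j * Mj * a j m = Mj * (ρ m ^ (D * (-(1 / N)))) := by
            rw [ha_def]
            simp only [hrj, mul_zero, neg_zero, Real.rpow_zero, one_mul]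
            rw [mul_comm (ρ m ^ lam j) Mj, mul_assoc, ← Real.rpow_add (hρ0 m)]
            have hμj : lam j + -μf j = D * (-(1 / N)) := by
              rw [hμ_def]
              simp only [hrj]
              ring
            rw [hμj]
          have h3 : ρ m ^ (D * (-(1 / N))) ≤ 1 := hρD m _ (neg_nonpos.2 (by positivity))
          calc ‖t‖ ^ lam j * a j m ≤ Mj * ρ m ^ (D * (-(1 / N))) := by rw [← h2]; exact h1
            _ ≤ Mj * 1 := mul_le_mul_of_nonneg_left h3 hMj0.le
            _ = Mj := mul_one Mj
        · push_neg at hex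
          rw [hfzero j t hex, mul_zero]
          exact zero_le
      exact ne_top_of_le_ne_top ENNReal.ofReal_ne_top
        (essSup_le_of_ae_le _ (Filter.Eventually.of_forall hbnd))
    · -- `p j < ∞`
      set P : ℝ := (p j).toReal with hP_def
      have hP1 : 1 ≤ P := by
        rw [hP_def, ← ENNReal.toReal_one]
        exact (ENNReal.toReal_le_toReal ENNReal.one_ne_top hpt).2 (hp j)
      have hP0 : 0 < P := lt_of_lt_of_le zero_lt_one hP1
      have hrjP : r j * P = 1 := by
        rw [hr_def]
        simp only [one_div, ENNReal.toReal_inv]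
        exact inv_mul_cancel₀ (ne_of_gt hP0)
      rw [_root_.lpNorm, if_neg hpt, ← hP_def]
      apply ENNReal.rpow_ne_top_of_nonneg (by positivity)
      set G : EuclideanSpace ℝ (Fin k) → ENNReal := fun t =>
        ∑' m, (Ean j m).indicator
          (fun _ => ENNReal.ofReal ((ρ m ^ lam j * Mj * a j m) ^ P)) t with hG_def
      have hpoint : ∀ t, (ENNReal.ofReal (‖t‖ ^ lam j) * f j t) ^ P ≤ G t := by
        intro t
        by_cases hex : ∃ m, t ∈ Ean j m
        · obtain ⟨m, hm⟩ := hex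
          rw [hfval j t m hm]
          have h1 : ENNReal.ofReal (‖t‖ ^ lam j) * ENNReal.ofReal (a j m)
              ≤ ENNReal.ofReal (ρ m ^ lam j * Mj * a j m) := by
            rw [← ENNReal.ofReal_mul (Real.rpow_nonneg (norm_nonneg t) _)]
            exact ENNReal.ofReal_le_ofReal
              (mul_le_mul_of_nonneg_right (hwb m t hm) (ha0 j m).le)
          have hpos : 0 < ρ m ^ lam j * Mj * a j m :=
            mul_pos (mul_pos (Real.rpow_pos_of_pos (hρ0 m) _) hMj0) (ha0 j m)
          calc (ENNReal.ofReal (‖t‖ ^ lam j) * ENNReal.ofReal (a j m)) ^ P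
              ≤ (ENNReal.ofReal (ρ m ^ lam j * Mj * a j m)) ^ P :=
                ENNReal.rpow_le_rpow h1 hP0.le
            _ = ENNReal.ofReal ((ρ m ^ lam j * Mj * a j m) ^ P) :=
                ENNReal.ofReal_rpow_of_pos hpos
            _ ≤ G t :=
                le_trans (le_of_eq (Set.indicator_of_mem hm
                  (fun _ => ENNReal.ofReal ((ρ m ^ lam j * Mj * a j m) ^ P))).symm)
                  (ENNReal.le_tsum m)
        · push_neg at hex
          rw [hfzero j t hex, mul_zero, ENNReal.zero_rpow_of_pos hP0]
          exact zero_le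
      have hGint : ∫⁻ t, G t
          = ∑' m, ENNReal.ofReal ((ρ m ^ lam j * Mj * a j m) ^ P) * volume (Ean j m) := by
        rw [hG_def, lintegral_tsum fun m =>
          (measurable_const.indicator (hEanmeas j m)).aemeasurable]
        exact tsum_congr fun m => lintegral_indicator_const (hEanmeas j m) _
      have hEvol : ∀ m, volume (Ean j m)
          ≤ ENNReal.ofReal ((ρ m * (2 * c j)) ^ k)
            * volume (Metric.ball (0 : EuclideanSpace ℝ (Fin k)) 1) := by
        intro m
        refine le_trans (measure_mono fun t ht => mem_ball_zero_iff.2 ht.2) ?_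
        rw [MeasureTheory.Measure.addHaar_ball volume _ (by
          have := hρ0 m; have := hc j; positivity)]
        rw [finrank_euclideanSpace, Fintype.card_fin]
      have hterm : ∀ m : ℕ, ENNReal.ofReal ((ρ m ^ lam j * Mj * a j m) ^ P) * volume (Ean j m)
          ≤ ENNReal.ofReal (Mj ^ P * (2 * c j) ^ k) * ENNReal.ofReal (((m:ℝ) + 1) ^ (-q))
            * volume (Metric.ball (0 : EuclideanSpace ℝ (Fin k)) 1) := by
        intro m
        have hXpos : (0:ℝ) < (ρ m ^ lam j * Mj * a j m) ^ P :=
          Real.rpow_pos_of_pos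
            (mul_pos (mul_pos (Real.rpow_pos_of_pos (hρ0 m) _) hMj0) (ha0 j m)) _
        have hreal : (ρ m ^ lam j * Mj * a j m) ^ P * (ρ m * (2 * c j)) ^ k
            ≤ Mj ^ P * (2 * c j) ^ k * ((m:ℝ) + 1) ^ (-q) := by
          have e1 : (ρ m ^ lam j * Mj * a j m) ^ P
              = Mj ^ P * ((m:ℝ) + 1) ^ (-q) * ρ m ^ ((lam j - μf j) * P) := by
            have hb1 : ρ m ^ lam j * Mj * a j m
                = Mj * (((m:ℝ) + 1) ^ (-(q * r j)) * ρ m ^ (lam j - μf j)) := by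
              rw [ha_def]
              rw [show ρ m ^ lam j * Mj * (((m:ℝ) + 1) ^ (-(q * r j)) * ρ m ^ (-μf j))
                  = Mj * (((m:ℝ) + 1) ^ (-(q * r j)) * (ρ m ^ lam j * ρ m ^ (-μf j))) from by
                ring]
              rw [← Real.rpow_add (hρ0 m), ← sub_eq_add_neg]
            rw [hb1, Real.mul_rpow hMj0.le (by positivity),
              Real.mul_rpow (Real.rpow_nonneg (by positivity) _) (Real.rpow_nonneg (hρ0 m).le _),
              ← Real.rpow_mul (by positivity : (0:ℝ) ≤ (m:ℝ) + 1), ← Real.rpow_mul (hρ0 m).le,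
              show -(q * r j) * P = -q from by rw [neg_mul, mul_assoc, hrjP, mul_one]]
            ring
          have e2 : (ρ m * (2 * c j)) ^ k = (2 * c j) ^ k * ρ m ^ ((k:ℕ):ℝ) := by
            rw [mul_pow, Real.rpow_natCast, mul_comm]
          rw [e1, e2]
          have hexp : (lam j - μf j) * P + ((k:ℕ):ℝ) = D * (-(P / N)) := by
            have h1 : lam j - μf j = -((k:ℝ) * r j) - D / N := by rw [hμ_def]; ring
            rw [h1]
            linear_combination (-(k:ℝ)) * hrjP
          have e3 : ρ m ^ ((lam j - μf j) * P) * ρ m ^ ((k:ℕ):ℝ)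
              = ρ m ^ (D * (-(P / N))) := by
            rw [← Real.rpow_add (hρ0 m), hexp]
          have h3 : ρ m ^ (D * (-(P / N))) ≤ 1 := hρD m _ (neg_nonpos.2 (by positivity))
          calc Mj ^ P * ((m:ℝ) + 1) ^ (-q) * ρ m ^ ((lam j - μf j) * P)
                * ((2 * c j) ^ k * ρ m ^ ((k:ℕ):ℝ))
              = Mj ^ P * (2 * c j) ^ k * ((m:ℝ) + 1) ^ (-q)
                * (ρ m ^ ((lam j - μf j) * P) * ρ m ^ ((k:ℕ):ℝ)) := by ring
            _ = Mj ^ P * (2 * c j) ^ k * ((m:ℝ) + 1) ^ (-q) * ρ m ^ (D * (-(P / N))) := by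
                rw [e3]
            _ ≤ Mj ^ P * (2 * c j) ^ k * ((m:ℝ) + 1) ^ (-q) * 1 := by
                apply mul_le_mul_of_nonneg_left h3
                have h4 : (0:ℝ) ≤ Mj ^ P := (Real.rpow_pos_of_pos hMj0 _).le
                have h5 : (0:ℝ) ≤ (2 * c j) ^ k := by positivity
                have h6 : (0:ℝ) ≤ ((m:ℝ) + 1) ^ (-q) := Real.rpow_nonneg (by positivity) _
                positivity
            _ = Mj ^ P * (2 * c j) ^ k * ((m:ℝ) + 1) ^ (-q) := mul_one _
        calc ENNReal.ofReal ((ρ m ^ lam j * Mj * a j m) ^ P) * volume (Ean j m)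
            ≤ ENNReal.ofReal ((ρ m ^ lam j * Mj * a j m) ^ P)
              * (ENNReal.ofReal ((ρ m * (2 * c j)) ^ k)
                * volume (Metric.ball (0 : EuclideanSpace ℝ (Fin k)) 1)) :=
              mul_le_mul_right (hEvol m) _
          _ = ENNReal.ofReal ((ρ m ^ lam j * Mj * a j m) ^ P * (ρ m * (2 * c j)) ^ k)
              * volume (Metric.ball (0 : EuclideanSpace ℝ (Fin k)) 1) := by
              rw [← mul_assoc, ← ENNReal.ofReal_mul hXpos.le]
          _ ≤ ENNReal.ofReal (Mj ^ P * (2 * c j) ^ k * ((m:ℝ) + 1) ^ (-q))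
              * volume (Metric.ball (0 : EuclideanSpace ℝ (Fin k)) 1) :=
              mul_le_mul_left (ENNReal.ofReal_le_ofReal hreal) _
          _ = ENNReal.ofReal (Mj ^ P * (2 * c j) ^ k) * ENNReal.ofReal (((m:ℝ) + 1) ^ (-q))
              * volume (Metric.ball (0 : EuclideanSpace ℝ (Fin k)) 1) := by
              rw [ENNReal.ofReal_mul (by positivity)]
      apply ne_top_of_le_ne_top
        (b := ENNReal.ofReal (Mj ^ P * (2 * c j) ^ k)
          * (∑' m : ℕ, ENNReal.ofReal (((m:ℝ) + 1) ^ (-q)))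
          * volume (Metric.ball (0 : EuclideanSpace ℝ (Fin k)) 1))
      · exact ENNReal.mul_ne_top
          (ENNReal.mul_ne_top ENNReal.ofReal_ne_top (aux_tsum_ne_top hq1))
          measure_ball_lt_top.ne
      · calc ∫⁻ t, (ENNReal.ofReal (‖t‖ ^ lam j) * f j t) ^ P
              ≤ ∫⁻ t, G t := lintegral_mono hpoint
          _ = ∑' m, ENNReal.ofReal ((ρ m ^ lam j * Mj * a j m) ^ P) * volume (Ean j m) :=
              hGint
          _ ≤ ∑' m : ℕ, ENNReal.ofReal (Mj ^ P * (2 * c j) ^ k)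
              * ENNReal.ofReal (((m:ℝ) + 1) ^ (-q))
              * volume (Metric.ball (0 : EuclideanSpace ℝ (Fin k)) 1) :=
              ENNReal.tsum_le_tsum hterm
          _ = ENNReal.ofReal (Mj ^ P * (2 * c j) ^ k)
              * (∑' m : ℕ, ENNReal.ofReal (((m:ℝ) + 1) ^ (-q)))
              * volume (Metric.ball (0 : EuclideanSpace ℝ (Fin k)) 1) := by
              rw [ENNReal.tsum_mul_right, ENNReal.tsum_mul_left]
  -- conclusion
  have hfin : C * ∏ j, lpNorm (fun t => ENNReal.ofReal (‖t‖ ^ lam j) * f j t) (p j) ≠ ⊤ :=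
    ENNReal.mul_ne_top hC (ENNReal.prod_lt_top fun j _ => lt_top_iff_ne_top.2 (hRHS j)).ne
  have h := hbound f hfmeas
  rw [← hF_def] at h
  rw [hLHStop] at h
  exact hfin (top_le_iff.1 h)
end
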